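/- arXiv:1711.06422 — 4 statements merged into one kernel-verified Lean document; each statement's English description precedes it below -/
import Mathlib

section
/- Let 2 ≤ y ≤ z ≤ x be real numbers and let A be a finite set of integers contained in [2, x]. Then #{a ∈ A : every prime p dividing a satisfies y ≤ p ≤ z} = Σ_{y ≤ p ≤ z, p prime} #{n ≥ 2 : np ∈ A, every prime q dividing n satisfies y ≤ q ≤ p} + #{a ∈ A : y ≤ a ≤ z, a prime}. -/
open scoped BigOperators Classical

/-- Buchstab-type identity: for `2 ≤ y ≤ z ≤ x` and a finite set `A` of
integers in `[2, x]`, the number of `a ∈ A` with all prime factors in `[y, z]`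
equals the sum over primes `p ∈ [y, z]` of the number of `n ≥ 2` with `n·p ∈ A`
and all prime factors of `n` in `[y, p]`, plus the number of primes
`a ∈ A ∩ [y, z]`. -/
theorem buchstab_identity (x y z : ℝ) (hy : 2 ≤ y) (hyz : y ≤ z) (hzx : z ≤ x)
    (A : Finset ℕ) (hA : ∀ a ∈ A, 2 ≤ (a : ℝ) ∧ (a : ℝ) ≤ x) :
    (A.filter (fun a => ∀ p : ℕ, p.Prime → p ∣ a → y ≤ (p : ℝ) ∧ (p : ℝ) ≤ z)).card
      = (∑ p ∈ (Finset.Icc 1 ⌊z⌋₊).filter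
            (fun p : ℕ => p.Prime ∧ y ≤ (p : ℝ) ∧ (p : ℝ) ≤ z),
          ((Finset.Icc 2 ⌊x⌋₊).filter
            (fun n : ℕ => n * p ∈ A ∧
              ∀ q : ℕ, q.Prime → q ∣ n → y ≤ (q : ℝ) ∧ (q : ℝ) ≤ (p : ℝ))).card)
        + (A.filter (fun a : ℕ => a.Prime ∧ y ≤ (a : ℝ) ∧ (a : ℝ) ≤ z)).card := by
  classical
  set S := A.filter (fun a => ∀ p : ℕ, p.Prime → p ∣ a → y ≤ (p : ℝ) ∧ (p : ℝ) ≤ z) with hS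
  set P := (Finset.Icc 1 ⌊z⌋₊).filter
      (fun p : ℕ => p.Prime ∧ y ≤ (p : ℝ) ∧ (p : ℝ) ≤ z) with hP
  set T := fun p : ℕ => (Finset.Icc 2 ⌊x⌋₊).filter
      (fun n : ℕ => n * p ∈ A ∧
        ∀ q : ℕ, q.Prime → q ∣ n → y ≤ (q : ℝ) ∧ (q : ℝ) ≤ (p : ℝ)) with hT
  -- step 1: split S by primality
  have hsplit : S.card = (S.filter (fun a => ¬ a.Prime)).card
      + (S.filter (fun a => a.Prime)).card := by
    rw [add_comm]
    exact (Finset.card_filter_add_card_filter_not (p := fun a => Nat.Prime a)).symm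
  -- step 2: prime part equals second summand
  have hprime : S.filter (fun a => a.Prime)
      = A.filter (fun a : ℕ => a.Prime ∧ y ≤ (a : ℝ) ∧ (a : ℝ) ≤ z) := by
    ext a
    simp only [hS, Finset.mem_filter, and_assoc]
    constructor
    · rintro ⟨haA, hall, hp⟩
      exact ⟨haA, hp, hall a hp dvd_rfl⟩
    · rintro ⟨haA, hp, hb⟩
      refine ⟨haA, ?_, hp⟩
      intro q hq hqa
      rwa [(Nat.prime_dvd_prime_iff_eq hq hp).mp hqa]
  -- step 3: composite part equals the sum
  have hcomp : (S.filter (fun a => ¬ a.Prime)).card = ∑ p ∈ P, (T p).card := by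
    rw [← Finset.card_sigma]
    apply Finset.card_bij (fun (s : Σ _ : ℕ, ℕ) _ => s.2 * s.1) ?_ ?_ ?_ |>.symm
    · -- maps into
      rintro ⟨p, n⟩ hs
      rw [Finset.mem_sigma] at hs
      obtain ⟨hpP, hnT⟩ := hs
      rw [hP, Finset.mem_filter] at hpP
      obtain ⟨-, hpp, hyp, hpz⟩ := hpP
      rw [hT] at hnT
      simp only [Finset.mem_filter, Finset.mem_Icc] at hnT
      obtain ⟨⟨hn2, -⟩, hnpA, hq⟩ := hnT
      rw [Finset.mem_filter, hS, Finset.mem_filter]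
      refine ⟨⟨hnpA, ?_⟩, ?_⟩
      · intro q hq' hqd
        rcases (Nat.Prime.dvd_mul hq').mp hqd with h | h
        · obtain ⟨h1, h2⟩ := hq q hq' h
          exact ⟨h1, h2.trans hpz⟩
        · rw [(Nat.prime_dvd_prime_iff_eq hq' hpp).mp h]
          exact ⟨hyp, hpz⟩
      · dsimp only
        intro hpr
        rcases Nat.prime_mul_iff.mp hpr with ⟨-, h1⟩ | ⟨-, h1⟩
        · exact absurd h1 hpp.ne_one
        · omega
    · -- injective
      rintro ⟨p₁, n₁⟩ hs₁ ⟨p₂, n₂⟩ hs₂ heq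
      rw [Finset.mem_sigma] at hs₁ hs₂
      obtain ⟨hp₁, hn₁⟩ := hs₁
      obtain ⟨hp₂, hn₂⟩ := hs₂
      rw [hP, Finset.mem_filter] at hp₁ hp₂
      rw [hT, Finset.mem_filter] at hn₁ hn₂
      have hle : ∀ (p₁ n₁ p₂ n₂ : ℕ), p₁.Prime → p₂.Prime →
          (∀ q : ℕ, q.Prime → q ∣ n₂ → y ≤ (q : ℝ) ∧ (q : ℝ) ≤ (p₂ : ℝ)) →
          n₁ * p₁ = n₂ * p₂ → p₁ ≤ p₂ := by
        intro p₁ n₁ p₂ n₂ hpp₁ hpp₂ hq₂ he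
        have hd : p₁ ∣ n₂ * p₂ := by rw [← he]; exact dvd_mul_left p₁ n₁
        rcases (Nat.Prime.dvd_mul hpp₁).mp hd with h | h
        · exact_mod_cast (hq₂ p₁ hpp₁ h).2
        · exact ((Nat.prime_dvd_prime_iff_eq hpp₁ hpp₂).mp h).le
      dsimp at heq
      have hpe : p₁ = p₂ :=
        le_antisymm (hle p₁ n₁ p₂ n₂ hp₁.2.1 hp₂.2.1 hn₂.2.2 heq)
          (hle p₂ n₂ p₁ n₁ hp₂.2.1 hp₁.2.1 hn₁.2.2 heq.symm)
      subst hpe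
      have hne : n₁ = n₂ := Nat.eq_of_mul_eq_mul_right hp₁.2.1.pos heq
      simp [hne]
    · -- surjective
      intro a ha
      rw [Finset.mem_filter, hS, Finset.mem_filter] at ha
      obtain ⟨⟨haA, hall⟩, hnp⟩ := ha
      obtain ⟨ha2, hax⟩ := hA a haA
      have ha2' : 2 ≤ a := by exact_mod_cast ha2
      have hane : a.primeFactors.Nonempty := by
        rw [Nat.nonempty_primeFactors]; omega
      set p := a.primeFactors.max' hane with hpdef
      have hpmem : p ∈ a.primeFactors := Finset.max'_mem _ _
      rw [Nat.mem_primeFactors] at hpmem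
      obtain ⟨hpp, hpa, -⟩ := hpmem
      obtain ⟨hyp, hpz⟩ := hall p hpp hpa
      set n := a / p with hndef
      have hnp' : n * p = a := Nat.div_mul_cancel hpa
      have hn1 : n ≠ 1 := by
        intro h; rw [h, one_mul] at hnp'; exact hnp (hnp' ▸ hpp)
      have hn0 : n ≠ 0 := by
        intro h; rw [h, zero_mul] at hnp'; omega
      have hn2 : 2 ≤ n := (Nat.two_le_iff n).mpr ⟨hn0, hn1⟩

      refine ⟨⟨p, n⟩, ?_, hnp'⟩
      rw [Finset.mem_sigma, hP, hT]
      simp only [Finset.mem_filter, Finset.mem_Icc]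
      refine ⟨⟨⟨hpp.one_le, Nat.le_floor hpz⟩, hpp, hyp, hpz⟩,
        ⟨hn2, ?_⟩, hnp' ▸ haA, ?_⟩
      · calc n ≤ a := Nat.le_of_dvd (by omega) ⟨p, hnp'.symm⟩
          _ ≤ ⌊x⌋₊ := Nat.le_floor hax
      · intro q hq hqn
        have hqa : q ∣ a := hqn.trans ⟨p, hnp'.symm⟩
        refine ⟨(hall q hq hqa).1, ?_⟩
        have : q ≤ p := Finset.le_max' _ q (Nat.mem_primeFactors.mpr ⟨hq, hqa, by omega⟩)
        exact_mod_cast this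
  rw [hsplit, hprime, hcomp]
end

section
/- For any real numbers ρ > 0, T > 0, and γ with |γ| ≠ ρ, the integral (1/π)∫_{−T}^{T} e^{iγt}·(sin(ρt)/t) dt equals 1 + O(T^{−1}(ρ − |γ|)^{−1}) if |γ| < ρ, and equals O(T^{−1}(|γ| − ρ)^{−1}) if |γ| > ρ; explicitly, there is an absolute constant C such that |(1/π)∫_{−T}^{T} e^{iγt} sin(ρt)/t dt − 𝟙[|γ|<ρ]| ≤ C/(T·||γ|−ρ|). -/
/-!
Pairing `t` with `-t` turns `e^{iγt}` into `2 cos γt`, and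
`2 cos(γt) sin(ρt) = sin((ρ+γ)t) + sin((ρ-γ)t)`, so the integral is `Si((ρ+γ)T) + Si((ρ-γ)T)`
with `Si x = ∫₀ˣ sin t / t dt`. Writing `1/t = ∫₀^∞ e^{-st} ds` and integrating in `t` first gives
`Si x = ∫₀^∞ (1 - e^{-sx}(cos x + s sin x)) / (1 + s²) ds`; since `∫₀^∞ ds / (1 + s²) = π/2` and
`|cos x + s sin x| ≤ 1 + s²`, this yields `|Si x - sign(x) π/2| ≤ 1/|x|`. It remains to note that
`|ρ ± γ| ≥ ||γ| - ρ|` and that `sign(ρ+γ) + sign(ρ-γ)` is `2` if `|γ| < ρ` and `0` if `|γ| > ρ`.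
-/

open MeasureTheory Set Real

noncomputable def sineIntegral (x : ℝ) : ℝ := ∫ t in (0 : ℝ)..x, sin t / t

-- Holds at `t = 0` too: both sides are `0` there, since `x / 0 = 0`.
lemma sin_mul_div_eq_mul_sin_div (a t : ℝ) : sin (a * t) / t = a * (sin (a * t) / (a * t)) := by
  rcases eq_or_ne a 0 with rfl | ha
  · simp
  rcases eq_or_ne t 0 with rfl | ht
  · simp
  field_simp

lemma integral_sin_mul_div (a T : ℝ) :
    ∫ t in (0 : ℝ)..T, sin (a * t) / t = sineIntegral (a * T) := by
  simp_rw [sin_mul_div_eq_mul_sin_div a, intervalIntegral.integral_const_mul]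
  simpa [sineIntegral] using
    intervalIntegral.smul_integral_comp_mul_left (fun u => sin u / u) a (a := 0) (b := T)

lemma sineIntegral_neg (x : ℝ) : sineIntegral (-x) = -sineIntegral x := by
  simpa [sineIntegral, neg_div, intervalIntegral.integral_neg] using
    (integral_sin_mul_div (-1) x).symm

lemma intervalIntegrable_sin_mul_div (a c d : ℝ) :
    IntervalIntegrable (fun t => sin (a * t) / t) volume c d := by
  refine (((continuous_sinc.comp (continuous_const_mul a)).const_mul a).intervalIntegrable
    c d).congr_ae ?_
  filter_upwards [ae_restrict_of_ae (Measure.ae_ne (volume : Measure ℝ) 0)] with t ht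
  rcases eq_or_ne a 0 with rfl | ha
  · simp
  simp [sinc_of_ne_zero (mul_ne_zero ha ht)]
  field_simp

lemma exp_neg_mul_comm (s t : ℝ) : exp (-(s * t)) = exp (-t * s) := by ring_nf

lemma integral_Ioi_exp_neg_mul {t : ℝ} (ht : 0 < t) :
    ∫ s in Ioi (0 : ℝ), exp (-(s * t)) = 1 / t := by
  simp_rw [exp_neg_mul_comm _ t]
  rw [integral_exp_mul_Ioi (neg_neg_iff_pos.2 ht)]
  field_simp
  simp

lemma integrableOn_Ioi_exp_neg_mul {t : ℝ} (ht : 0 < t) :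
    IntegrableOn (fun s => exp (-(s * t))) (Ioi 0) := by
  simpa only [exp_neg_mul_comm _ t] using integrableOn_exp_mul_Ioi (neg_neg_iff_pos.2 ht) 0

lemma hasDerivAt_exp_neg_mul_sin_primitive (s t : ℝ) :
    HasDerivAt (fun t => -exp (-(s * t)) * (cos t + s * sin t) / (1 + s ^ 2))
      (exp (-(s * t)) * sin t) t := by
  have hexp : HasDerivAt (fun t => -exp (-(s * t))) (s * exp (-(s * t))) t := by
    simpa [mul_comm] using ((hasDerivAt_const_mul s).fun_neg.exp).fun_neg
  have htrig : HasDerivAt (fun t => cos t + s * sin t) (-sin t + s * cos t) t :=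
    (hasDerivAt_cos t).add ((hasDerivAt_sin t).const_mul s)
  refine ((hexp.mul htrig).div_const _).congr_deriv ?_
  field_simp
  ring

lemma integral_Ioc_exp_neg_mul_sin (s T : ℝ) (hT : 0 ≤ T) :
    ∫ t in Ioc 0 T, exp (-(s * t)) * sin t
      = (1 - exp (-(s * T)) * (cos T + s * sin T)) / (1 + s ^ 2) := by
  have hcont : Continuous fun t => exp (-(s * t)) * sin t := by fun_prop
  rw [← intervalIntegral.integral_of_le hT, intervalIntegral.integral_eq_sub_of_hasDerivAt
    (fun t _ => hasDerivAt_exp_neg_mul_sin_primitive s t) (hcont.intervalIntegrable _ _)]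
  simp
  ring

lemma integrable_exp_neg_mul_mul_sin_prod (T : ℝ) :
    Integrable (Function.uncurry fun t s => exp (-(s * t)) * sin t)
      ((volume.restrict (Ioc 0 T)).prod (volume.restrict (Ioi 0))) := by
  have hmeas : AEStronglyMeasurable (Function.uncurry fun t s => exp (-(s * t)) * sin t)
      ((volume.restrict (Ioc 0 T)).prod (volume.restrict (Ioi 0))) :=
    (by fun_prop : Continuous (Function.uncurry fun t s => exp (-(s * t)) * sin t))
      |>.aestronglyMeasurable
  refine (integrable_prod_iff hmeas).2 ⟨?_, ?_⟩
  · filter_upwards [ae_restrict_mem measurableSet_Ioc] with t ht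
    exact (integrableOn_Ioi_exp_neg_mul ht.1).mul_const (sin t)
  · refine (integrable_const (1 : ℝ)).mono' hmeas.norm.integral_prod_right' ?_
    filter_upwards [ae_restrict_mem measurableSet_Ioc] with t ht
    have h : ∫ s in Ioi (0 : ℝ), ‖exp (-(s * t)) * sin t‖ = |sin t| / t := by
      simp_rw [norm_mul, norm_of_nonneg (exp_pos _).le, integral_mul_const,
        integral_Ioi_exp_neg_mul ht.1, norm_eq_abs]
      ring
    simp only [Function.uncurry_apply_pair]
    rw [h, norm_of_nonneg (div_nonneg (abs_nonneg _) ht.1.le), div_le_one ht.1]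
    exact abs_sin_le_abs.trans_eq (abs_of_pos ht.1)

lemma sineIntegral_eq_integral_Ioi {T : ℝ} (hT : 0 < T) :
    sineIntegral T
      = ∫ s in Ioi 0, (1 - exp (-(s * T)) * (cos T + s * sin T)) / (1 + s ^ 2) := by
  have hinner : ∀ t ∈ Ioc (0 : ℝ) T, sin t / t = ∫ s in Ioi 0, exp (-(s * t)) * sin t :=
    fun t ht => by rw [integral_mul_const, integral_Ioi_exp_neg_mul ht.1, one_div_mul_eq_div]
  rw [sineIntegral, intervalIntegral.integral_of_le hT.le,
    setIntegral_congr_fun measurableSet_Ioc hinner,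
    integral_integral_swap (integrable_exp_neg_mul_mul_sin_prod T)]
  simp_rw [integral_Ioc_exp_neg_mul_sin _ _ hT.le]

lemma integrableOn_Ioi_one_sub_exp_neg_mul {T : ℝ} (hT : 0 ≤ T) :
    IntegrableOn (fun s => (1 - exp (-(s * T)) * (cos T + s * sin T)) / (1 + s ^ 2)) (Ioi 0) :=
  (integrable_exp_neg_mul_mul_sin_prod T).integral_prod_right.congr
    (ae_of_all _ fun s => integral_Ioc_exp_neg_mul_sin s T hT)

lemma abs_cos_add_mul_sin_le (x s : ℝ) : |cos x + s * sin x| ≤ 1 + s ^ 2 := by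
  refine abs_le_of_sq_le_sq ?_ (by positivity)
  nlinarith [sq_nonneg (sin x - s * cos x), sin_sq_add_cos_sq x, sq_nonneg s]

lemma abs_sineIntegral_sub_pi_div_two_le {x : ℝ} (hx : 0 < x) :
    |sineIntegral x - π / 2| ≤ 1 / x := by
  have hpi : π / 2 = ∫ s in Ioi (0 : ℝ), (1 + s ^ 2)⁻¹ := by simp
  have hdiff : ∀ s : ℝ,
      (1 - exp (-(s * x)) * (cos x + s * sin x)) / (1 + s ^ 2) - (1 + s ^ 2)⁻¹
        = -(exp (-(s * x)) * ((cos x + s * sin x) / (1 + s ^ 2))) := fun s => by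
    field_simp
    ring
  have hle : ∀ s : ℝ,
      ‖exp (-(s * x)) * ((cos x + s * sin x) / (1 + s ^ 2))‖ ≤ exp (-(s * x)) := fun s => by
    have hden : (0 : ℝ) < 1 + s ^ 2 := by positivity
    rw [norm_mul, norm_of_nonneg (exp_pos _).le, norm_div, norm_of_nonneg hden.le]
    exact mul_le_of_le_one_right (exp_pos _).le
      ((div_le_one hden).2 (abs_cos_add_mul_sin_le x s))
  rw [sineIntegral_eq_integral_Ioi hx, hpi, ← integral_sub
    (integrableOn_Ioi_one_sub_exp_neg_mul hx.le) integrable_inv_one_add_sq.integrableOn]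
  simp_rw [hdiff, integral_neg, abs_neg, ← norm_eq_abs, ← integral_Ioi_exp_neg_mul hx]
  exact norm_integral_le_of_norm_le (integrableOn_Ioi_exp_neg_mul hx) (ae_of_all _ hle)

lemma abs_sineIntegral_sub_sign_mul_le {x : ℝ} (hx : x ≠ 0) :
    |sineIntegral x - Real.sign x * (π / 2)| ≤ 1 / |x| := by
  rcases hx.lt_or_gt with h | h
  · rw [sign_of_neg h, abs_of_neg h, ← abs_neg]
    convert abs_sineIntegral_sub_pi_div_two_le (neg_pos.2 h) using 2
    rw [sineIntegral_neg]
    ring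
  · rw [sign_of_pos h, abs_of_pos h, one_mul]
    exact abs_sineIntegral_sub_pi_div_two_le h

lemma intervalIntegral.integral_neg_eq_integral_add_comp_neg {E : Type*} [NormedAddCommGroup E]
    [NormedSpace ℝ E] {f : ℝ → E} {T : ℝ} (hf : IntervalIntegrable f volume (-T) T) :
    ∫ t in (-T)..T, f t = ∫ t in (0 : ℝ)..T, (f t + f (-t)) := by
  have h0 : (0 : ℝ) ∈ uIcc (-T) T := by
    rcases le_total 0 T with h | h <;> simp [h]
  have hl := hf.mono_set (uIcc_subset_uIcc_left h0)
  have hr := hf.mono_set (uIcc_subset_uIcc_right h0)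
  have hl' : IntervalIntegrable (fun t => f (-t)) volume 0 T := by
    simpa using ((IntervalIntegrable.iff_comp_neg (by simp)).1 hl).symm
  rw [← intervalIntegral.integral_add_adjacent_intervals hl hr,
    intervalIntegral.integral_add hr hl', add_comm, intervalIntegral.integral_comp_neg, neg_zero]

lemma exp_mul_sin_div_add_comp_neg (ρ γ t : ℝ) :
    Complex.exp (Complex.I * γ * t) * ((sin (ρ * t) / t : ℝ) : ℂ)
        + Complex.exp (Complex.I * γ * ((-t : ℝ) : ℂ)) * ((sin (ρ * -t) / -t : ℝ) : ℂ)
      = ((sin ((ρ + γ) * t) / t + sin ((ρ - γ) * t) / t : ℝ) : ℂ) := by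
  have hcos : Complex.exp (Complex.I * γ * t) + Complex.exp (Complex.I * γ * ((-t : ℝ) : ℂ))
      = ((2 * cos (γ * t) : ℝ) : ℂ) := by
    push_cast
    rw [Complex.two_cos]
    congr 2 <;> ring
  have htrig : 2 * cos (γ * t) * (sin (ρ * t) / t)
      = sin ((ρ + γ) * t) / t + sin ((ρ - γ) * t) / t := by
    rw [add_mul, sub_mul, ← add_div, add_comm, ← two_mul_sin_mul_cos]
    ring
  rw [mul_neg, sin_neg, neg_div_neg_eq, ← add_mul, hcos, ← Complex.ofReal_mul, htrig]

lemma integral_exp_mul_sin_div (ρ γ T : ℝ) :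
    ∫ t in (-T)..T, Complex.exp (Complex.I * γ * t) * ((sin (ρ * t) / t : ℝ) : ℂ)
      = ((sineIntegral ((ρ + γ) * T) + sineIntegral ((ρ - γ) * T) : ℝ) : ℂ) := by
  have hf : IntervalIntegrable (fun t => ((sin (ρ * t) / t : ℝ) : ℂ)) volume (-T) T :=
    intervalIntegrable_iff.2
      (intervalIntegrable_iff.1 (intervalIntegrable_sin_mul_div ρ _ _)).ofReal
  rw [intervalIntegral.integral_neg_eq_integral_add_comp_neg (hf.continuousOn_mul (by fun_prop))]
  simp_rw [exp_mul_sin_div_add_comp_neg]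
  rw [intervalIntegral.integral_ofReal, intervalIntegral.integral_add
    (intervalIntegrable_sin_mul_div _ _ _) (intervalIntegrable_sin_mul_div _ _ _),
    integral_sin_mul_div, integral_sin_mul_div]

lemma Real.sign_mul_of_pos {a T : ℝ} (hT : 0 < T) : Real.sign (a * T) = Real.sign a := by
  rcases lt_trichotomy a 0 with h | rfl | h
  · rw [sign_of_neg h, sign_of_neg (mul_neg_of_neg_of_pos h hT)]
  · simp
  · rw [sign_of_pos h, sign_of_pos (mul_pos h hT)]

lemma sign_add_add_sign_sub {ρ γ : ℝ} (hρ : 0 < ρ) (hγ : |γ| ≠ ρ) :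
    Real.sign (ρ + γ) + Real.sign (ρ - γ) = if |γ| < ρ then 2 else 0 := by
  rcases hγ.lt_or_gt with h | h
  · obtain ⟨h₁, h₂⟩ := abs_lt.1 h
    rw [if_pos h, sign_of_pos (by linarith), sign_of_pos (by linarith)]
    norm_num
  · rw [if_neg h.not_gt]
    rcases lt_abs.1 h with h' | h'
    · rw [sign_of_pos (by linarith), sign_of_neg (by linarith)]; norm_num
    · rw [sign_of_neg (by linarith), sign_of_pos (by linarith)]; norm_num

lemma abs_sineIntegral_add_div_pi_sub_indicator_le {ρ T γ : ℝ} (hρ : 0 < ρ) (hT : 0 < T)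
    (hγ : |γ| ≠ ρ) :
    |(sineIntegral ((ρ + γ) * T) + sineIntegral ((ρ - γ) * T)) / π - if |γ| < ρ then 1 else 0|
      ≤ 1 / (T * |(|γ| - ρ)|) := by
  set d := |(|γ| - ρ)|
  have hd : 0 < d := abs_pos.2 (sub_ne_zero.2 hγ)
  have hSi : ∀ a, d ≤ |a| →
      |sineIntegral (a * T) - Real.sign a * (π / 2)| ≤ 1 / (T * d) := by
    intro a ha
    have haT : a * T ≠ 0 := mul_ne_zero (abs_pos.1 (hd.trans_le ha)) hT.ne'
    calc _ = |sineIntegral (a * T) - Real.sign (a * T) * (π / 2)| := by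
          rw [Real.sign_mul_of_pos hT]
      _ ≤ 1 / |a * T| := abs_sineIntegral_sub_sign_mul_le haT
      _ ≤ 1 / (T * d) := by
          rw [abs_mul, abs_of_pos hT, mul_comm]
          gcongr
  have h₁ := hSi (ρ + γ) (by
    simpa [abs_of_pos hρ, add_comm] using abs_abs_sub_abs_le_abs_sub γ (-ρ))
  have h₂ := hSi (ρ - γ) (by
    simpa only [abs_of_pos hρ] using
      (abs_abs_sub_abs_le_abs_sub γ ρ).trans_eq (abs_sub_comm γ ρ))
  have hind : (if |γ| < ρ then (1 : ℝ) else 0)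
      = (Real.sign (ρ + γ) * (π / 2) + Real.sign (ρ - γ) * (π / 2)) / π := by
    rw [← add_mul, sign_add_add_sign_sub hρ hγ]
    split_ifs
    · field_simp
    · simp
  rw [hind, ← sub_div, abs_div, abs_of_pos pi_pos, div_le_iff₀ pi_pos]
  calc _ = |(sineIntegral ((ρ + γ) * T) - Real.sign (ρ + γ) * (π / 2))
          + (sineIntegral ((ρ - γ) * T) - Real.sign (ρ - γ) * (π / 2))| := by
        congr 1
        ring
    _ ≤ 1 / (T * d) + 1 / (T * d) := (abs_add_le _ _).trans (add_le_add h₁ h₂)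
    _ ≤ 1 / (T * d) * π := by
        rw [← mul_two]
        gcongr
        exact two_le_pi

/-- Truncated Perron formula: there is an absolute constant `C` such that for
all `ρ > 0`, `T > 0` and real `γ` with `|γ| ≠ ρ`,
`|(1/π)∫_{-T}^{T} e^{iγt}·sin(ρt)/t dt − 𝟙[|γ| < ρ]| ≤ C/(T·||γ| − ρ|)`. -/
theorem truncated_perron :
    ∃ C : ℝ, 0 < C ∧ ∀ ρ T γ : ℝ, 0 < ρ → 0 < T → |γ| ≠ ρ →
      ‖(1 / (π : ℂ)) * (∫ t in (-T)..T,
            Complex.exp (Complex.I * (γ : ℂ) * (t : ℂ)) *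
              ((Real.sin (ρ * t) / t : ℝ) : ℂ)) -
          (if |γ| < ρ then (1 : ℂ) else 0)‖
        ≤ C / (T * (abs (|γ| - ρ))) := by
  refine ⟨1, one_pos, fun ρ T γ hρ hT hγ => ?_⟩
  have hreal : ∀ x : ℝ, 1 / (π : ℂ) * x - (if |γ| < ρ then 1 else 0)
      = ((x / π - if |γ| < ρ then 1 else 0 : ℝ) : ℂ) := fun x => by
    split_ifs <;> push_cast <;> ring
  rw [integral_exp_mul_sin_div, hreal, Complex.norm_real, norm_eq_abs]
  exact abs_sineIntegral_add_div_pi_sub_indicator_le hρ hT hγ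
end

section
/- Let L be a positive integer and δ ∈ (0, 1/2). Define χ(θ) = 1 if ‖θ‖ < δ and 0 otherwise. Then there exist complex sequences (c_ℓ⁻)_{0<|ℓ|≤L} and (c_ℓ⁺)_{0<|ℓ|≤L} such that for every real θ: 2δ − 1/(L+1) + Σ_{0<|ℓ|≤L} c_ℓ⁻ e(ℓθ) ≤ χ(θ) ≤ 2δ + 1/(L+1) + Σ_{0<|ℓ|≤L} c_ℓ⁺ e(ℓθ), and |c_ℓ^{±}| ≤ min{2δ + 1/(L+1), 3/(2|ℓ|)} for all 0 < |ℓ| ≤ L. -/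
/-!
Write `ψ(x) = {x} - 1/2`. For `0 < δ < 1/2` one has `χ(θ) = 2δ + ψ(θ - δ) + ψ(-θ - δ)`, so it
suffices to find a trigonometric polynomial `M` of degree `< N = L + 1` with constant term
`-1/(2N)` and `M ≤ ψ`: then also `ψ(x) ≤ -M(-x)`, and shifted copies of `M` and of `-M(-·)` bound
`χ` from below and above.

`M` is Vaaler's polynomial minus `1/(2N)` times the Fejér kernel. It interpolates `ψ` at the points
`j/N`, and `M'` interpolates `ψ' = 1` at those with `0 < j < N`. So `g(x) = x - 1/2 - M(x)`
vanishes at `0, 1/N, …, (N-1)/N`, while `g' = 1 - M'`, a trigonometric polynomial of degree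
`N - 1`, vanishes at the `j/N` with `0 < j < N` and, by Rolle, once between consecutive points
`j/N`. These `2N - 2` zeros in `[0, 1)` are as many as the polynomial `z ^ (N-1) g'(x)` in
`z = e(x)` allows, so they are all the zeros of `g'` and all of them are simple. Hence `g'` changes
sign at each of them, and starting from `g'(0) > 0` one reads off `g ≥ 0` on `[0, 1]`.

The coefficient bounds come from `0 ≤ π ℓ B_ℓ ≤ 1` for the sine coefficients `B_ℓ` of `M`, which is
`u cot u ≤ 1` on `(0, π)`.
-/

open scoped BigOperators Real Classical

noncomputable section

namespace Vaaler

open Finset Real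

def e (x : ℝ) : ℂ := Complex.exp (2 * π * Complex.I * x)

lemma e_pow_eq_cos_add_sin (x : ℝ) (ℓ : ℕ) :
    e x ^ ℓ = Complex.cos (2 * π * ℓ * x) + Complex.sin (2 * π * ℓ * x) * Complex.I := by
  rw [e, ← Complex.exp_nat_mul, ← Complex.exp_mul_I]
  ring_nf

lemma e_pow (x : ℝ) (ℓ : ℕ) : e x ^ ℓ = e (ℓ * x) := by
  rw [e, e, ← Complex.exp_nat_mul]
  push_cast
  ring_nf

lemma re_e (x : ℝ) : (e x).re = cos (2 * π * x) := by
  rw [e, show 2 * π * Complex.I * x = ↑(2 * π * x) * Complex.I by push_cast; ring,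
    Complex.exp_ofReal_mul_I_re]

lemma re_e_pow (x : ℝ) (ℓ : ℕ) : (e x ^ ℓ).re = cos (2 * π * ℓ * x) := by
  rw [e_pow, re_e, ← mul_assoc]

lemma hasDerivAt_e (x : ℝ) : HasDerivAt e (2 * π * Complex.I * e x) x := by
  have h := (((hasDerivAt_id x).ofReal_comp).const_mul (2 * π * Complex.I)).cexp
  simp only [id, Complex.ofReal_one, mul_one, mul_comm (Complex.exp _)] at h
  convert h using 1 <;> rfl

lemma injOn_e : Set.InjOn e (Set.Ico 0 1) := by
  intro x hx y hy hxy
  obtain ⟨n, hn⟩ := Complex.exp_eq_exp_iff_exists_int.mp hxy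
  have hxy' : x = y + n := by
    have h2πI : (2 * π * Complex.I : ℂ) ≠ 0 := by simp [Real.pi_ne_zero]
    have : (x : ℂ) = y + n := mul_left_cancel₀ h2πI (by linear_combination hn)
    exact_mod_cast this
  have h1 : n < 1 := by
    have : (n : ℝ) < 1 := by linarith [hx.2, hy.1]
    exact_mod_cast this
  have h2 : -1 < n := by
    have : (-1 : ℝ) < n := by linarith [hx.1, hy.2]
    exact_mod_cast this
  obtain rfl : n = 0 := by omega
  simpa using hxy'

def trigPoly (n : ℕ) (c : ℝ) (a b : ℕ → ℝ) (x : ℝ) : ℝ :=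
  c + ∑ ℓ ∈ Icc 1 n, (a ℓ * cos (2 * π * ℓ * x) + b ℓ * sin (2 * π * ℓ * x))

section TrigPoly

variable {n : ℕ} {c : ℝ} {a b : ℕ → ℝ}

lemma hasDerivAt_trigPoly (x : ℝ) :
    HasDerivAt (trigPoly n c a b)
      (trigPoly n 0 (fun ℓ => 2 * π * ℓ * b ℓ) (fun ℓ => -(2 * π * ℓ * a ℓ)) x) x := by
  unfold trigPoly
  rw [zero_add]
  refine (HasDerivAt.fun_sum fun ℓ _ => ?_).const_add c
  have hlin : HasDerivAt (fun y : ℝ => 2 * π * ℓ * y) (2 * π * ℓ) x := by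
    simpa using (hasDerivAt_id x).const_mul (2 * π * (ℓ : ℝ))
  convert ((hlin.cos).const_mul (a ℓ)).fun_add ((hlin.sin).const_mul (b ℓ)) using 1
  beta_reduce
  ring

lemma differentiable_trigPoly : Differentiable ℝ (trigPoly n c a b) :=
  fun x => (hasDerivAt_trigPoly x).differentiableAt

lemma trigPoly_periodic : Function.Periodic (trigPoly n c a b) 1 := by
  intro x
  unfold trigPoly
  congr 1
  refine sum_congr rfl fun ℓ _ => ?_
  have h : 2 * π * ℓ * (x + 1) = 2 * π * ℓ * x + ℓ * (2 * π) := by ring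
  rw [h, cos_add_nat_mul_two_pi, sin_add_nat_mul_two_pi]

open Polynomial in
def trigPolyPolynomial (n : ℕ) (c : ℝ) (a b : ℕ → ℝ) : ℂ[X] :=
  C (c : ℂ) * X ^ n + ∑ ℓ ∈ Icc 1 n,
    (C ((a ℓ - b ℓ * Complex.I) / 2) * X ^ (n + ℓ) + C ((a ℓ + b ℓ * Complex.I) / 2) * X ^ (n - ℓ))

lemma eval_trigPolyPolynomial (x : ℝ) :
    (trigPolyPolynomial n c a b).eval (e x) = e x ^ n * trigPoly n c a b x := by
  simp only [trigPolyPolynomial, trigPoly, Polynomial.eval_add, Polynomial.eval_mul,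
    Polynomial.eval_pow, Polynomial.eval_C, Polynomial.eval_X, Polynomial.eval_finsetSum]
  push_cast
  rw [mul_add, mul_sum, mul_comm]
  congr 1
  refine sum_congr rfl fun ℓ hℓ => ?_
  have hℓn : ℓ ≤ n := (mem_Icc.mp hℓ).2
  have hsplit : e x ^ n = e x ^ (n - ℓ) * e x ^ ℓ := by rw [← pow_add, Nat.sub_add_cancel hℓn]
  have hsplit' : e x ^ (n + ℓ) = e x ^ (n - ℓ) * e x ^ ℓ * e x ^ ℓ := by
    rw [← pow_add, ← pow_add]; congr 1; omega
  rw [hsplit, hsplit']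
  generalize e x ^ (n - ℓ) = E
  rw [e_pow_eq_cos_add_sin]
  have hpyth := Complex.cos_sq_add_sin_sq (2 * π * ℓ * x)
  linear_combination (-E * ((a ℓ : ℂ) / 2 + (b ℓ : ℂ) / 2 * Complex.I)) * hpyth
    + (E * ((a ℓ : ℂ) * Complex.sin (2 * π * ℓ * x) ^ 2 / 2
      - (b ℓ : ℂ) * Complex.cos (2 * π * ℓ * x) * Complex.sin (2 * π * ℓ * x)
      - (b ℓ : ℂ) * Complex.sin (2 * π * ℓ * x) ^ 2 / 2 * Complex.I)) * Complex.I_sq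

lemma natDegree_trigPolyPolynomial_le : (trigPolyPolynomial n c a b).natDegree ≤ 2 * n := by
  have hmon : ∀ (z : ℂ) (k : ℕ), k ≤ 2 * n →
      (Polynomial.C z * Polynomial.X ^ k).natDegree ≤ 2 * n :=
    fun z k hk => (Polynomial.natDegree_C_mul_X_pow_le z k).trans hk
  refine Polynomial.natDegree_add_le_of_degree_le (hmon _ _ (by omega))
    (Polynomial.natDegree_sum_le_of_forall_le _ _ fun ℓ hℓ => ?_)
  have hℓn := (mem_Icc.mp hℓ).2
  exact Polynomial.natDegree_add_le_of_degree_le (hmon _ _ (by omega)) (hmon _ _ (by omega))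

lemma coeff_trigPolyPolynomial_self : (trigPolyPolynomial n c a b).coeff n = c := by
  rw [trigPolyPolynomial, Polynomial.coeff_add, Polynomial.coeff_C_mul_X_pow, if_pos rfl,
    Polynomial.finsetSum_coeff, sum_eq_zero, add_zero]
  intro ℓ hℓ
  obtain ⟨hℓ1, hℓn⟩ := mem_Icc.mp hℓ
  rw [Polynomial.coeff_add, Polynomial.coeff_C_mul_X_pow, Polynomial.coeff_C_mul_X_pow,
    if_neg (by omega), if_neg (by omega), add_zero]

lemma trigPolyPolynomial_ne_zero (hc : c ≠ 0) : trigPolyPolynomial n c a b ≠ 0 := by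
  intro h
  have := coeff_trigPolyPolynomial_self (n := n) (c := c) (a := a) (b := b)
  rw [h, Polynomial.coeff_zero] at this
  exact hc (by exact_mod_cast this.symm)

lemma isRoot_trigPolyPolynomial {x : ℝ} (hx : trigPoly n c a b x = 0) :
    (trigPolyPolynomial n c a b).IsRoot (e x) := by
  rw [Polynomial.IsRoot.def, eval_trigPolyPolynomial, hx, Complex.ofReal_zero, mul_zero]

lemma isRoot_derivative_trigPolyPolynomial {x : ℝ} (hx : trigPoly n c a b x = 0)
    (hx' : deriv (trigPoly n c a b) x = 0) :
    (Polynomial.derivative (trigPolyPolynomial n c a b)).IsRoot (e x) := by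
  set P := trigPolyPolynomial n c a b
  have hcomp : HasDerivAt (fun y => P.eval (e y))
      (P.derivative.eval (e x) * (2 * π * Complex.I * e x)) x :=
    (P.hasDerivAt (e x)).comp x (hasDerivAt_e x)
  have hprod : HasDerivAt (fun y => P.eval (e y))
      (n * e x ^ (n - 1) * (2 * π * Complex.I * e x) * trigPoly n c a b x
        + e x ^ n * deriv (trigPoly n c a b) x) x := by
    simp only [P, eval_trigPolyPolynomial]
    exact ((hasDerivAt_pow n (e x)).comp x (hasDerivAt_e x)).mul
      (differentiable_trigPoly x).hasDerivAt.ofReal_comp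
  have h := hcomp.unique hprod
  simp only [hx, hx', Complex.ofReal_zero, mul_zero, add_zero] at h
  have he : 2 * π * Complex.I * e x ≠ 0 := by simp [Real.pi_ne_zero, e]
  exact (mul_eq_zero.mp h).resolve_right he

lemma sum_rootMultiplicity_le {S : Finset ℝ} (hS : ↑S ⊆ Set.Ico (0 : ℝ) 1) :
    ∑ s ∈ S, (trigPolyPolynomial n c a b).rootMultiplicity (e s) ≤ 2 * n := by
  set P := trigPolyPolynomial n c a b
  calc ∑ s ∈ S, P.rootMultiplicity (e s)
      = ∑ z ∈ S.image e, P.roots.count z := by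
        rw [sum_image (injOn_e.mono hS)]
        simp only [Polynomial.count_roots]
    _ ≤ ∑ z ∈ P.roots.toFinset, P.roots.count z :=
        sum_le_sum_of_ne_zero fun z _ hz => Multiset.mem_toFinset.mpr (Multiset.count_ne_zero.mp hz)
    _ = Multiset.card P.roots := Multiset.toFinset_sum_count_eq _
    _ ≤ 2 * n := (Polynomial.card_roots' P).trans natDegree_trigPolyPolynomial_le

variable {S : Finset ℝ} (hc : c ≠ 0) (hcard : S.card = 2 * n)
  (hS : ∀ s ∈ S, s ∈ Set.Ico (0 : ℝ) 1 ∧ trigPoly n c a b s = 0)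
include hc hcard hS

theorem mem_of_trigPoly_eq_zero {x : ℝ} (hx : x ∈ Set.Ico (0 : ℝ) 1)
    (hx0 : trigPoly n c a b x = 0) : x ∈ S := by
  by_contra hxS
  have hsub : ↑(insert x S) ⊆ Set.Ico (0 : ℝ) 1 := by
    simpa [Set.insert_subset_iff] using ⟨hx, fun s hs => (hS s hs).1⟩
  have hle := sum_rootMultiplicity_le (n := n) (c := c) (a := a) (b := b) hsub
  have hone : ∀ s ∈ insert x S, 1 ≤ (trigPolyPolynomial n c a b).rootMultiplicity (e s) := by
    intro s hs
    refine (Polynomial.rootMultiplicity_pos (trigPolyPolynomial_ne_zero hc)).mpr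
      (isRoot_trigPolyPolynomial ?_)
    rcases mem_insert.mp hs with rfl | hs
    exacts [hx0, (hS s hs).2]
  have := card_nsmul_le_sum _ _ 1 hone
  rw [card_insert_of_notMem hxS, hcard, smul_eq_mul, mul_one] at this
  omega

theorem deriv_trigPoly_ne_zero {s : ℝ} (hs : s ∈ S) : deriv (trigPoly n c a b) s ≠ 0 := by
  intro hs'
  have hP := trigPolyPolynomial_ne_zero (n := n) (a := a) (b := b) hc
  have hle := sum_rootMultiplicity_le (n := n) (c := c) (a := a) (b := b)
    fun t ht => (hS t (by exact_mod_cast ht)).1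
  have hone : ∀ t ∈ S, 1 ≤ (trigPolyPolynomial n c a b).rootMultiplicity (e t) := fun t ht =>
    (Polynomial.rootMultiplicity_pos hP).mpr (isRoot_trigPolyPolynomial (hS t ht).2)
  have htwo : 1 < (trigPolyPolynomial n c a b).rootMultiplicity (e s) :=
    (Polynomial.one_lt_rootMultiplicity_iff_isRoot hP).mpr
      ⟨isRoot_trigPolyPolynomial (hS s hs).2, isRoot_derivative_trigPolyPolynomial (hS s hs).2 hs'⟩
  rw [← add_sum_erase S _ hs] at hle
  have hrest := card_nsmul_le_sum (S.erase s) _ 1 fun t ht => hone t (mem_of_mem_erase ht)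
  rw [card_erase_of_mem hs, hcard, smul_eq_mul, mul_one] at hrest
  omega

end TrigPoly

section SignChanges

open Set Filter Topology

lemma pos_or_neg_of_ne_zero {f : ℝ → ℝ} {s : Set ℝ} (hs : IsPreconnected s)
    (hf : ContinuousOn f s) (h0 : ∀ x ∈ s, f x ≠ 0) : (∀ x ∈ s, 0 < f x) ∨ ∀ x ∈ s, f x < 0 := by
  by_contra! h
  obtain ⟨⟨x, hx, hfx⟩, y, hy, hfy⟩ := h
  obtain ⟨z, hz, hfz⟩ := hs.intermediate_value hx hy hf ⟨hfx, hfy⟩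
  exact h0 z hz hfz

lemma exists_pos_right_of_deriv_ne_zero {f : ℝ → ℝ} {x₀ c d : ℝ} (hc : c < x₀) (hd : x₀ < d)
    (hf₀ : f x₀ = 0) (hf' : deriv f x₀ ≠ 0) (hneg : ∀ x ∈ Ioo c x₀, f x < 0) :
    ∃ x ∈ Ioo x₀ d, 0 < f x := by
  rcases hf'.lt_or_gt with hlt | hgt
  · obtain ⟨x, hsign, hx⟩ := (((eventually_nhdsWithin_sign_eq_of_deriv_neg hlt hf₀).filter_mono
      nhdsWithin_le_nhds).and (Ioo_mem_nhdsLT hc)).exists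
    rw [sign_neg (hneg x hx), eq_comm, sign_eq_neg_one_iff] at hsign
    exact absurd hsign (by linarith [hx.2])
  · obtain ⟨x, hsign, hx⟩ := (((eventually_nhdsWithin_sign_eq_of_deriv_pos hgt hf₀).filter_mono
      nhdsWithin_le_nhds).and (Ioo_mem_nhdsGT hd)).exists
    rw [sign_pos (sub_pos.mpr hx.1), sign_eq_one_iff] at hsign
    exact ⟨x, hx, hsign⟩

lemma exists_mem_Icc_succ (w : ℕ → ℝ) {x : ℝ} :
    ∀ K, x ∈ Icc (w 0) (w (K + 1)) → ∃ k ≤ K, x ∈ Icc (w k) (w (k + 1))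
  | 0, hx => ⟨0, le_rfl, hx⟩
  | K + 1, hx => by
    by_cases hxK : x ≤ w (K + 1)
    · obtain ⟨k, hk, hxk⟩ := exists_mem_Icc_succ w K ⟨hx.1, hxK⟩
      exact ⟨k, by omega, hxk⟩
    · exact ⟨K + 1, le_rfl, (not_le.mp hxK).le, hx.2⟩

variable {g Q : ℝ → ℝ} (hg : ∀ x, HasDerivAt g (Q x) x)
include hg

lemma strictMonoOn_Icc_of_pos {u v : ℝ} (hQ : ∀ x ∈ Ioo u v, 0 < Q x) : StrictMonoOn g (Icc u v) :=
  strictMonoOn_of_hasDerivWithinAt_pos (convex_Icc u v)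
    (fun x _ => (hg x).continuousAt.continuousWithinAt)
    (fun x _ => (hg x).hasDerivWithinAt) (by simpa using hQ)

lemma strictAntiOn_Icc_of_neg {u v : ℝ} (hQ : ∀ x ∈ Ioo u v, Q x < 0) : StrictAntiOn g (Icc u v) :=
  strictAntiOn_of_hasDerivWithinAt_neg (convex_Icc u v)
    (fun x _ => (hg x).continuousAt.continuousWithinAt)
    (fun x _ => (hg x).hasDerivWithinAt) (by simpa using hQ)

variable {w : ℕ → ℝ} {m : ℕ} (hQ : Differentiable ℝ Q)
  (hw : ∀ k ≤ 2 * m, w k < w (k + 1))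
  (hgap : ∀ k ≤ 2 * m, ∀ x ∈ Ioo (w k) (w (k + 1)), Q x ≠ 0)
  (hg₀ : ∀ j ≤ m, g (w (2 * j)) = 0)
include hQ hw hgap hg₀

lemma neg_on_odd_gap {j : ℕ} (hj : j < m) (hpos : ∀ x ∈ Ioo (w (2 * j)) (w (2 * j + 1)), 0 < Q x) :
    ∀ x ∈ Ioo (w (2 * j + 1)) (w (2 * j + 2)), Q x < 0 := by
  have hpeak : 0 < g (w (2 * j + 1)) := by
    have := strictMonoOn_Icc_of_pos hg hpos (left_mem_Icc.mpr (hw _ (by omega)).le)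
      (right_mem_Icc.mpr (hw _ (by omega)).le) (hw _ (by omega))
    rwa [hg₀ j hj.le] at this
  refine (pos_or_neg_of_ne_zero isPreconnected_Ioo hQ.continuous.continuousOn
    (hgap _ (by omega))).resolve_left fun hpos' => ?_
  have := strictMonoOn_Icc_of_pos hg hpos' (left_mem_Icc.mpr (hw _ (by omega)).le)
    (right_mem_Icc.mpr (hw _ (by omega)).le) (hw _ (by omega))
  have hnext := hg₀ (j + 1) hj
  rw [show 2 * (j + 1) = 2 * j + 2 by ring] at hnext
  linarith

variable (hQ₀ : ∀ j, 0 < j → j ≤ m → Q (w (2 * j)) = 0)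
  (hQ' : ∀ j, 0 < j → j ≤ m → deriv Q (w (2 * j)) ≠ 0)
  (hstart : 0 < Q (w 0))
include hQ₀ hQ' hstart

lemma pos_on_even_gap : ∀ j ≤ m, ∀ x ∈ Ioo (w (2 * j)) (w (2 * j + 1)), 0 < Q x := by
  have hsign : ∀ j ≤ m, (∃ y ∈ Ioo (w (2 * j)) (w (2 * j + 1)), 0 < Q y) →
      ∀ x ∈ Ioo (w (2 * j)) (w (2 * j + 1)), 0 < Q x := fun j hj ⟨y, hy, hQy⟩ =>
    (pos_or_neg_of_ne_zero isPreconnected_Ioo hQ.continuous.continuousOn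
      (hgap _ (by omega))).resolve_right fun hneg => (hneg y hy).not_gt hQy
  intro j
  induction j with
  | zero =>
    intro _
    refine hsign 0 (Nat.zero_le _) ?_
    obtain ⟨y, hQy, hy⟩ := ((hQ.continuous.tendsto (w 0)).eventually (lt_mem_nhds hstart)
      |>.filter_mono nhdsWithin_le_nhds |>.and (Ioo_mem_nhdsGT (hw 0 (by omega)))).exists
    exact ⟨y, hy, hQy⟩
  | succ j ih =>
    intro hj
    have hneg := neg_on_odd_gap hg hQ hw hgap hg₀ (by omega) (ih (by omega))
    have hQ₀' := hQ₀ (j + 1) j.succ_pos hj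
    have hQ'' := hQ' (j + 1) j.succ_pos hj
    exact hsign (j + 1) hj (exists_pos_right_of_deriv_ne_zero (hw (2 * j + 1) (by omega))
      (hw (2 * j + 2) (by omega)) hQ₀' hQ'' hneg)

theorem nonneg_of_alternating_zeros : ∀ x ∈ Icc (w 0) (w (2 * m + 1)), 0 ≤ g x := by
  intro x hx
  obtain ⟨k, hk, hxk⟩ := exists_mem_Icc_succ w (2 * m) hx
  have hpos := pos_on_even_gap hg hQ hw hgap hg₀ hQ₀ hQ' hstart
  obtain ⟨j, rfl | rfl⟩ := Nat.even_or_odd' k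
  · rw [← hg₀ j (by omega)]
    exact (strictMonoOn_Icc_of_pos hg (hpos j (by omega))).monotoneOn
      (left_mem_Icc.mpr (hw _ (by omega)).le) hxk hxk.1
  · rw [← hg₀ (j + 1) (by omega)]
    exact (strictAntiOn_Icc_of_neg hg (neg_on_odd_gap hg hQ hw hgap hg₀ (by omega)
      (hpos j (by omega)))).antitoneOn hxk (right_mem_Icc.mpr (hw _ (by omega)).le) hxk.2

end SignChanges

lemma sum_Icc_cos_eq_neg_one {N m : ℕ} (hm : 0 < m) (hmN : m < N) :
    ∑ ℓ ∈ Icc 1 (N - 1), cos (2 * π * ℓ * (m / N)) = -1 := by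
  have hN : (0 : ℝ) < N := by exact_mod_cast hm.trans hmN
  have hne : e (m / N) ≠ 1 := by
    have hmem : (m / N : ℝ) ∈ Set.Ico 0 1 :=
      ⟨by positivity, (div_lt_one hN).mpr (by exact_mod_cast hmN)⟩
    intro h
    have := injOn_e hmem ⟨le_rfl, one_pos⟩ (h.trans (by simp [e]))
    exact hm.ne' (by exact_mod_cast (div_eq_zero_iff.mp this).resolve_right hN.ne')
  have hgeom : ∑ ℓ ∈ range N, e (m / N) ^ ℓ = 0 := by
    rw [geom_sum_eq hne, e_pow, mul_div_cancel₀ _ hN.ne',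
      show e m = 1 by simpa [e, mul_comm] using Complex.exp_nat_mul_two_pi_mul_I m]
    simp
  have hre := congrArg Complex.re hgeom
  simp only [Complex.re_sum, re_e_pow, Complex.zero_re] at hre
  rw [show range N = insert 0 (Icc 1 (N - 1)) by
      ext; simp only [mem_range, mem_insert, mem_Icc]; omega,
    sum_insert (by simp)] at hre
  simp only [CharP.cast_eq_zero, zero_mul, mul_zero, cos_zero] at hre
  linarith

lemma sin_two_mul_add_one_mul (a : ℝ) (j : ℕ) :
    sin ((2 * j + 1) * a) = sin a * (1 + 2 * ∑ m ∈ Icc 1 j, cos (2 * m * a)) := by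
  induction j with
  | zero => simp
  | succ j ih =>
    have hstep : sin ((2 * ((j + 1 : ℕ) : ℝ) + 1) * a)
        = sin ((2 * j + 1) * a) + 2 * sin a * cos (2 * ((j + 1 : ℕ) : ℝ) * a) := by
      have hx : (2 * ((j + 1 : ℕ) : ℝ) + 1) * a = (2 * j + 1) * a + 2 * a := by push_cast; ring
      have hy : 2 * ((j + 1 : ℕ) : ℝ) * a = (2 * j + 1) * a + a := by push_cast; ring
      rw [hx, hy, sin_add, cos_add, sin_two_mul, cos_two_mul]
      linear_combination (2 * sin ((2 * j + 1) * a)) * sin_sq_add_cos_sq a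
    rw [sum_Icc_succ_top (by omega), hstep, ih]
    ring

lemma cos_add_cot_mul_sin {a : ℝ} (ha : sin a ≠ 0) (j : ℕ) :
    cos (2 * j * a) + cot a * sin (2 * j * a) = 1 + 2 * ∑ m ∈ Icc 1 j, cos (2 * m * a) := by
  have h := sin_two_mul_add_one_mul a j
  rw [show (2 * j + 1) * a = 2 * j * a + a by ring, sin_add] at h
  have hcot : cos (2 * j * a) + cot a * sin (2 * j * a)
      = (sin (2 * j * a) * cos a + cos (2 * j * a) * sin a) / sin a := by
    rw [cot_eq_cos_div_sin]
    field_simp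
    ring
  rw [hcot, h, mul_div_cancel_left₀ _ ha]

lemma sum_Icc_cos_add_cot_mul_sin {N j : ℕ} (hj : j < N) :
    ∑ ℓ ∈ Icc 1 (N - 1), (cos (2 * π * ℓ * (j / N)) + cot (π * ℓ / N) * sin (2 * π * ℓ * (j / N)))
      = N - 1 - 2 * j := by
  have hN : (0 : ℝ) < N := by exact_mod_cast (Nat.zero_le j).trans_lt hj
  have hsin : ∀ ℓ ∈ Icc 1 (N - 1), sin (π * ℓ / N) ≠ 0 := by
    intro ℓ hℓ
    obtain ⟨h1, h2⟩ := mem_Icc.mp hℓ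
    refine (sin_pos_of_pos_of_lt_pi (by positivity) ?_).ne'
    rw [div_lt_iff₀ hN]
    exact mul_lt_mul_of_pos_left (by exact_mod_cast (show ℓ < N by omega)) pi_pos
  calc ∑ ℓ ∈ Icc 1 (N - 1),
        (cos (2 * π * ℓ * (j / N)) + cot (π * ℓ / N) * sin (2 * π * ℓ * (j / N)))
      = ∑ ℓ ∈ Icc 1 (N - 1), (1 + 2 * ∑ m ∈ Icc 1 j, cos (2 * π * ℓ * (m / N))) := by
        refine sum_congr rfl fun ℓ hℓ => ?_
        have h := cos_add_cot_mul_sin (hsin ℓ hℓ) j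
        simp only [show ∀ k : ℕ, 2 * (k : ℝ) * (π * ℓ / N) = 2 * π * ℓ * (k / N) by
          intro k; ring] at h
        exact h
    _ = (N - 1 : ℕ) + 2 * ∑ m ∈ Icc 1 j, ∑ ℓ ∈ Icc 1 (N - 1), cos (2 * π * ℓ * (m / N)) := by
        rw [sum_add_distrib, ← mul_sum, sum_comm, sum_const, Nat.card_Icc, nsmul_one]
        simp
    _ = N - 1 - 2 * j := by
        rw [sum_congr rfl fun m hm => sum_Icc_cos_eq_neg_one (mem_Icc.mp hm).1
          ((mem_Icc.mp hm).2.trans_lt hj)]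
        rw [sum_const, Nat.card_Icc, Nat.cast_sub (by omega : 1 ≤ N)]
        simp only [add_tsub_cancel_right, nsmul_eq_mul, Nat.cast_one]
        ring

lemma two_mul_sum_Icc_eq_sum_add_reflect (N : ℕ) (f : ℕ → ℝ) :
    2 * ∑ ℓ ∈ Icc 1 (N - 1), f ℓ = ∑ ℓ ∈ Icc 1 (N - 1), (f ℓ + f (N - ℓ)) := by
  rw [two_mul, sum_add_distrib]
  congr 1
  refine sum_nbij' (N - ·) (N - ·) ?_ ?_ ?_ ?_ ?_ <;> intro ℓ hℓ <;> simp only [mem_Icc] at hℓ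
  · simp only [mem_Icc]; omega
  · simp only [mem_Icc]; omega
  · omega
  · omega
  · rw [Nat.sub_sub_self (by omega)]

lemma cos_reflect {N : ℕ} (hN : N ≠ 0) (j : ℕ) {ℓ : ℕ} (hℓ : ℓ ≤ N) :
    cos (2 * π * (N - ℓ : ℕ) * (j / N)) = cos (2 * π * ℓ * (j / N)) := by
  rw [← cos_nat_mul_two_pi_sub _ j]
  congr 1
  push_cast [hℓ]
  field_simp
  ring

lemma sin_reflect {N : ℕ} (hN : N ≠ 0) (j : ℕ) {ℓ : ℕ} (hℓ : ℓ ≤ N) :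
    sin (2 * π * (N - ℓ : ℕ) * (j / N)) = -sin (2 * π * ℓ * (j / N)) := by
  rw [← sin_nat_mul_two_pi_sub _ j]
  congr 1
  push_cast [hℓ]
  field_simp

lemma cot_reflect {N : ℕ} (hN : N ≠ 0) {ℓ : ℕ} (hℓ : ℓ ≤ N) :
    cot (π * (N - ℓ : ℕ) / N) = -cot (π * ℓ / N) := by
  have h : π * ((N - ℓ : ℕ) : ℝ) / N = π - π * ℓ / N := by
    push_cast [hℓ]
    field_simp
  rw [h, cot_eq_cos_div_sin, cot_eq_cos_div_sin, cos_pi_sub, sin_pi_sub, neg_div]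

def coeffA (N ℓ : ℕ) : ℝ := (1 - ℓ / N) / N

def coeffB (N ℓ : ℕ) : ℝ := (1 - ℓ / N) * cot (π * ℓ / N) / N + 1 / (π * N)

section Reflection

variable {N ℓ : ℕ} (hN : N ≠ 0) (hℓ : ℓ ≤ N)
include hN hℓ

lemma coeffA_add_coeffA_reflect : coeffA N ℓ + coeffA N (N - ℓ) = 1 / N := by
  simp only [coeffA]
  push_cast [hℓ]
  field_simp
  ring

lemma mul_coeffA_reflect : ℓ * coeffA N ℓ = (N - ℓ : ℕ) * coeffA N (N - ℓ) := by
  simp only [coeffA]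
  push_cast [hℓ]
  field_simp
  ring

lemma coeffB_sub_coeffB_reflect : coeffB N ℓ - coeffB N (N - ℓ) = cot (π * ℓ / N) / N := by
  simp only [coeffB]
  rw [cot_reflect hN hℓ]
  push_cast [hℓ]
  field_simp
  ring

lemma mul_coeffB_add_mul_coeffB_reflect :
    ℓ * coeffB N ℓ + (N - ℓ : ℕ) * coeffB N (N - ℓ) = 1 / π := by
  simp only [coeffB]
  rw [cot_reflect hN hℓ]
  push_cast [hℓ]
  field_simp
  ring

end Reflection

def minorant (N : ℕ) : ℝ → ℝ :=
  trigPoly (N - 1) (-(1 / (2 * N))) (fun ℓ => -coeffA N ℓ) (fun ℓ => -coeffB N ℓ)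

def minorantGapDeriv (N : ℕ) : ℝ → ℝ :=
  trigPoly (N - 1) 1 (fun ℓ => 2 * π * ℓ * coeffB N ℓ) (fun ℓ => -(2 * π * ℓ * coeffA N ℓ))

lemma minorant_div {N j : ℕ} (hj : j < N) : minorant N (j / N) = j / N - 1 / 2 := by
  have hN : N ≠ 0 := by omega
  have h2 := two_mul_sum_Icc_eq_sum_add_reflect N
    (fun ℓ => -coeffA N ℓ * cos (2 * π * ℓ * (j / N)) + -coeffB N ℓ * sin (2 * π * ℓ * (j / N)))
  have hpair : ∀ ℓ ∈ Icc 1 (N - 1),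
      (-coeffA N ℓ * cos (2 * π * ℓ * (j / N)) + -coeffB N ℓ * sin (2 * π * ℓ * (j / N)))
        + (-coeffA N (N - ℓ) * cos (2 * π * (N - ℓ : ℕ) * (j / N))
          + -coeffB N (N - ℓ) * sin (2 * π * (N - ℓ : ℕ) * (j / N)))
      = -(1 / N) * (cos (2 * π * ℓ * (j / N)) + cot (π * ℓ / N) * sin (2 * π * ℓ * (j / N))) := by
    intro ℓ hℓ
    have hℓN : ℓ ≤ N := by simp only [mem_Icc] at hℓ; omega
    rw [cos_reflect hN j hℓN, sin_reflect hN j hℓN]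
    linear_combination (-cos (2 * π * ℓ * (j / N))) * coeffA_add_coeffA_reflect hN hℓN
      - sin (2 * π * ℓ * (j / N)) * coeffB_sub_coeffB_reflect hN hℓN
  rw [sum_congr rfl hpair, ← mul_sum, sum_Icc_cos_add_cot_mul_sin hj] at h2
  simp only [minorant, trigPoly]
  generalize (∑ ℓ ∈ Icc 1 (N - 1), _ : ℝ) = S at h2 ⊢
  field_simp at h2 ⊢
  linarith

lemma minorantGapDeriv_div {N j : ℕ} (hj0 : 0 < j) (hj : j < N) :
    minorantGapDeriv N (j / N) = 0 := by
  have hN : N ≠ 0 := by omega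
  have h2 := two_mul_sum_Icc_eq_sum_add_reflect N
    (fun ℓ => 2 * π * ℓ * coeffB N ℓ * cos (2 * π * ℓ * (j / N))
      + -(2 * π * ℓ * coeffA N ℓ) * sin (2 * π * ℓ * (j / N)))
  have hpair : ∀ ℓ ∈ Icc 1 (N - 1),
      (2 * π * ℓ * coeffB N ℓ * cos (2 * π * ℓ * (j / N))
        + -(2 * π * ℓ * coeffA N ℓ) * sin (2 * π * ℓ * (j / N)))
        + (2 * π * (N - ℓ : ℕ) * coeffB N (N - ℓ) * cos (2 * π * (N - ℓ : ℕ) * (j / N))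
          + -(2 * π * (N - ℓ : ℕ) * coeffA N (N - ℓ)) * sin (2 * π * (N - ℓ : ℕ) * (j / N)))
      = 2 * cos (2 * π * ℓ * (j / N)) := by
    intro ℓ hℓ
    have hℓN : ℓ ≤ N := by simp only [mem_Icc] at hℓ; omega
    rw [cos_reflect hN j hℓN, sin_reflect hN j hℓN]
    have hB := mul_coeffB_add_mul_coeffB_reflect hN hℓN
    field_simp at hB
    linear_combination (2 * cos (2 * π * ℓ * (j / N))) * hB
      - 2 * π * sin (2 * π * ℓ * (j / N)) * mul_coeffA_reflect hN hℓN
  rw [sum_congr rfl hpair, ← mul_sum, sum_Icc_cos_eq_neg_one hj0 hj] at h2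
  simp only [minorantGapDeriv, trigPoly]
  linarith

lemma mul_cos_le_sin {u : ℝ} (h0 : 0 ≤ u) (h1 : u ≤ π) : u * cos u ≤ sin u := by
  rcases le_or_gt (cos u) 0 with hc | hc
  · nlinarith [sin_nonneg_of_nonneg_of_le_pi h0 h1]
  · have hu : u < π / 2 := by
      by_contra! hu
      exact hc.not_ge (cos_nonpos_of_pi_div_two_le_of_le hu (by linarith [pi_pos]))
    have := le_tan h0 hu
    rwa [tan_eq_sin_div_cos, le_div_iff₀ hc] at this

lemma mul_cot_le_one {u : ℝ} (h0 : 0 < u) (h1 : u < π) : u * cot u ≤ 1 := by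
  rw [cot_eq_cos_div_sin, ← mul_div_assoc, div_le_one (sin_pos_of_pos_of_lt_pi h0 h1)]
  exact mul_cos_le_sin h0.le h1.le

section CoeffBounds

variable {N ℓ : ℕ} (hℓ : 0 < ℓ) (hℓN : ℓ < N)
include hℓ hℓN

lemma pi_mul_mul_coeffB_mem_Icc : π * ℓ * coeffB N ℓ ∈ Set.Icc 0 1 := by
  have hN : (0 : ℝ) < N := by exact_mod_cast hℓ.trans hℓN
  set t : ℝ := ℓ / N with ht
  have ht0 : 0 < t := by positivity
  have ht1 : t < 1 := (div_lt_one hN).mpr (by exact_mod_cast hℓN)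
  have hB : π * ℓ * coeffB N ℓ = (1 - t) * (π * t * cot (π * t)) + t := by
    simp only [coeffB, ht, mul_div_assoc]
    field_simp
  have hupper := mul_cot_le_one (mul_pos pi_pos ht0) (by nlinarith [pi_pos])
  have hlower := mul_cot_le_one (u := π * (1 - t)) (by nlinarith [pi_pos]) (by nlinarith [pi_pos])
  rw [show π * (1 - t) = π - π * t by ring, cot_eq_cos_div_sin, cos_pi_sub, sin_pi_sub, neg_div,
    ← cot_eq_cos_div_sin] at hlower
  rw [hB]
  constructor <;> nlinarith [pi_pos]

lemma coeffB_nonneg : 0 ≤ coeffB N ℓ := by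
  have h := (pi_mul_mul_coeffB_mem_Icc hℓ hℓN).1
  have : (0 : ℝ) < π * ℓ := by positivity
  exact nonneg_of_mul_nonneg_right (by linarith) this

lemma coeffB_le : coeffB N ℓ ≤ 1 / (π * ℓ) := by
  rw [le_div_iff₀ (by positivity), mul_comm]
  exact (pi_mul_mul_coeffB_mem_Icc hℓ hℓN).2

end CoeffBounds

lemma coeffA_mem_Icc {N ℓ : ℕ} (hℓN : ℓ ≤ N) : coeffA N ℓ ∈ Set.Icc 0 (1 / (N : ℝ)) := by
  rcases Nat.eq_zero_or_pos N with rfl | hN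
  · simp [coeffA]
  have hN' : (0 : ℝ) < N := by exact_mod_cast hN
  have ht : (ℓ : ℝ) / N ≤ 1 := (div_le_one hN').mpr (by exact_mod_cast hℓN)
  simp only [coeffA, Set.mem_Icc]
  constructor
  · exact div_nonneg (by linarith) hN'.le
  · exact div_le_div_of_nonneg_right (by linarith [show 0 ≤ (ℓ : ℝ) / N by positivity]) hN'.le

lemma abs_mul_coeffA_add_mul_coeffB_le {N n : ℕ} (hn : 0 < n) (hnN : n < N) {δ u v : ℝ}
    (hδ : 0 ≤ δ) (hu : |u| ≤ 1) (hv : |v| ≤ |sin (2 * π * n * δ)|) :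
    |u * coeffA N n + v * coeffB N n| ≤ min (2 * δ + 1 / N) (3 / (2 * n)) := by
  have hA := coeffA_mem_Icc (N := N) hnN.le
  have hB0 := coeffB_nonneg hn hnN
  have hn' : (0 : ℝ) < n := by exact_mod_cast hn
  have htri :
      |u * coeffA N n + v * coeffB N n| ≤ 1 / (N : ℝ) + |sin (2 * π * n * δ)| * coeffB N n := by
    calc |u * coeffA N n + v * coeffB N n|
        ≤ |u * coeffA N n| + |v * coeffB N n| := abs_add_le _ _
      _ = |u| * coeffA N n + |v| * coeffB N n := by
          rw [abs_mul, abs_mul, abs_of_nonneg hA.1, abs_of_nonneg hB0]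
      _ ≤ 1 * (1 / (N : ℝ)) + |sin (2 * π * n * δ)| * coeffB N n := by
          gcongr
          · exact hA.1
          · exact hA.2
      _ = _ := by ring
  refine le_min (htri.trans ?_) (htri.trans ?_)
  · have hsin : |sin (2 * π * n * δ)| ≤ 2 * π * n * δ :=
      (abs_sin_le_abs).trans (abs_of_nonneg (by positivity)).le
    have hπB := (pi_mul_mul_coeffB_mem_Icc hn hnN).2
    nlinarith
  · have hsin := abs_sin_le_one (2 * π * n * δ)
    have hB1 := coeffB_le hn hnN
    have hN : 1 / (N : ℝ) ≤ 1 / n :=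
      one_div_le_one_div_of_le hn' (by exact_mod_cast hnN.le)
    have hπ : 1 / (π * n) ≤ 1 / (3 * n) :=
      one_div_le_one_div_of_le (by positivity) (by nlinarith [pi_gt_three])
    have h3 : 1 / (n : ℝ) + 1 / (3 * n) ≤ 3 / (2 * n) := by
      field_simp
      norm_num
    nlinarith

lemma hasDerivAt_sub_minorant (N : ℕ) (x : ℝ) :
    HasDerivAt (fun y => y - 1 / 2 - minorant N y) (minorantGapDeriv N x) x := by
  refine (((hasDerivAt_id' x).sub_const (1 / 2)).fun_sub (hasDerivAt_trigPoly x)).congr_deriv ?_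
  simp only [minorantGapDeriv, trigPoly, zero_add, sub_eq_add_neg, ← sum_neg_distrib]
  congr 1
  exact sum_congr rfl fun ℓ _ => by ring

lemma minorantGapDeriv_zero_pos {N : ℕ} : 0 < minorantGapDeriv N 0 := by
  simp only [minorantGapDeriv, trigPoly, mul_zero, cos_zero, sin_zero, mul_one, add_zero]
  have : 0 ≤ ∑ ℓ ∈ Icc 1 (N - 1), 2 * π * ℓ * coeffB N ℓ := sum_nonneg fun ℓ hℓ => by
    obtain ⟨h1, h2⟩ := mem_Icc.mp hℓ
    have := coeffB_nonneg (N := N) (ℓ := ℓ) (by omega) (by omega)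
    positivity
  linarith

lemma exists_minorantGapDeriv_nodes {N : ℕ} (hN : 0 < N) : ∃ w : ℕ → ℝ,
    (∀ k ≤ 2 * (N - 1), w k < w (k + 1)) ∧ (∀ j : ℕ, w (2 * j) = j / N) ∧
    w (2 * (N - 1) + 1) = 1 ∧ ∀ j < N - 1, minorantGapDeriv N (w (2 * j + 1)) = 0 := by
  have hN' : (0 : ℝ) < N := by exact_mod_cast hN
  have hrolle : ∀ j : ℕ, ∃ r : ℝ, j + 1 < N →
      r ∈ Set.Ioo (j / N : ℝ) ((j + 1 : ℕ) / N) ∧ minorantGapDeriv N r = 0 := by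
    intro j
    by_cases hj : j + 1 < N
    · obtain ⟨r, hr, hQr⟩ := exists_hasDerivAt_eq_zero
        (div_lt_div_of_pos_right (show (j : ℝ) < (j + 1 : ℕ) by push_cast; linarith) hN')
        (fun y _ => (hasDerivAt_sub_minorant N y).continuousAt.continuousWithinAt)
        (by rw [minorant_div (by omega : j < N), minorant_div hj]; ring)
        (fun y _ => hasDerivAt_sub_minorant N y)
      exact ⟨r, fun _ => ⟨hr, hQr⟩⟩
    · exact ⟨0, fun h => absurd h hj⟩
  choose r hr using hrolle
  let w : ℕ → ℝ := fun k =>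
    if Even k then ((k / 2 : ℕ) : ℝ) / N else if k / 2 + 1 < N then r (k / 2) else 1
  have hw_even : ∀ j : ℕ, w (2 * j) = j / N := fun j => by simp [w]
  have hw_odd : ∀ j, w (2 * j + 1) = if j + 1 < N then r j else 1 := fun j => by
    simp [w, Nat.mul_add_div]
  refine ⟨w, fun k hk => ?_, hw_even, by rw [hw_odd, if_neg (by omega)],
    fun j hj => by rw [hw_odd, if_pos (by omega)]; exact (hr j (by omega)).2⟩
  obtain ⟨j, rfl | rfl⟩ := Nat.even_or_odd' k
  · rw [hw_even, hw_odd]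
    split_ifs with hj
    · exact (hr j hj).1.1
    · exact (div_lt_one hN').mpr (by exact_mod_cast (by omega : j < N))
  · rw [hw_odd, if_pos (by omega), show 2 * j + 1 + 1 = 2 * (j + 1) by ring, hw_even]
    exact (hr j (by omega)).1.2

theorem minorant_le_of_mem_Icc {N : ℕ} (hN : 0 < N) {x : ℝ} (hx : x ∈ Set.Icc (0 : ℝ) 1) :
    minorant N x ≤ x - 1 / 2 := by
  obtain ⟨w, hw, hw_even, hw_last, hw_odd⟩ := exists_minorantGapDeriv_nodes hN
  have hmono : StrictMonoOn w (Set.Iic (2 * (N - 1) + 1)) :=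
    strictMonoOn_Iic_of_lt_succ fun k hk => hw k (by simp only [Order.lt_add_one_iff] at hk; omega)
  have hw0 : w 0 = 0 := by simpa using hw_even 0
  have hlt : ∀ {k k'}, k ≤ 2 * (N - 1) + 1 → k' ≤ 2 * (N - 1) + 1 → (w k < w k' ↔ k < k') :=
    fun hk hk' => hmono.lt_iff_lt (Set.mem_Iic.mpr hk) (Set.mem_Iic.mpr hk')
  have hle : ∀ {k k'}, k' ≤ 2 * (N - 1) + 1 → k ≤ k' → w k ≤ w k' :=
    fun hk' hkk' => hmono.monotoneOn (Set.mem_Iic.mpr (hkk'.trans hk')) (Set.mem_Iic.mpr hk') hkk'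
  set S := (Icc 1 (2 * (N - 1))).image w
  have hcard : S.card = 2 * (N - 1) := by
    rw [card_image_of_injOn (hmono.injOn.mono fun k hk => by
      simp only [coe_Icc, Set.mem_Icc, Set.mem_Iic] at hk ⊢; omega), Nat.card_Icc]
    omega
  have hS : ∀ s ∈ S, s ∈ Set.Ico (0 : ℝ) 1 ∧ minorantGapDeriv N s = 0 := by
    simp only [S, mem_image, mem_Icc]
    rintro s ⟨k, ⟨hk1, hk2⟩, rfl⟩
    refine ⟨⟨hw0 ▸ hle (by omega) (Nat.zero_le k),
      hw_last ▸ (hlt (by omega) le_rfl).mpr (by omega)⟩, ?_⟩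
    obtain ⟨j, rfl | rfl⟩ := Nat.even_or_odd' k
    · rw [hw_even]; exact minorantGapDeriv_div (by omega) (by omega)
    · exact hw_odd j (by omega)
  have hgap : ∀ k ≤ 2 * (N - 1), ∀ y ∈ Set.Ioo (w k) (w (k + 1)), minorantGapDeriv N y ≠ 0 := by
    intro k hk y hy hQy
    have hy01 : y ∈ Set.Ico (0 : ℝ) 1 :=
      ⟨hw0 ▸ ((hle (by omega) (Nat.zero_le k)).trans hy.1.le),
        hy.2.trans_le (hw_last ▸ hle le_rfl (by omega))⟩
    obtain ⟨k', hk', rfl⟩ := mem_image.mp (mem_of_trigPoly_eq_zero one_ne_zero hcard hS hy01 hQy)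
    have := mem_Icc.mp hk'
    have h1 := (hlt (by omega) (by omega)).mp hy.1
    have h2 := (hlt (by omega) (by omega)).mp hy.2
    omega
  have hnonneg := nonneg_of_alternating_zeros (hasDerivAt_sub_minorant N) differentiable_trigPoly
    hw hgap (fun j hj => by rw [hw_even, minorant_div (by omega)]; ring)
    (fun j hj0 hj => by rw [hw_even]; exact minorantGapDeriv_div hj0 (by omega))
    (fun j hj0 hj => deriv_trigPoly_ne_zero one_ne_zero hcard hS
      (mem_image.mpr ⟨2 * j, mem_Icc.mpr ⟨by omega, by omega⟩, rfl⟩))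
    (hw0 ▸ minorantGapDeriv_zero_pos)
  rw [hw0, hw_last] at hnonneg
  linarith [hnonneg x hx]

theorem minorant_le_sawtooth {N : ℕ} (hN : 0 < N) (x : ℝ) :
    minorant N x ≤ Int.fract x - 1 / 2 := by
  have h := minorant_le_of_mem_Icc hN ⟨Int.fract_nonneg x, (Int.fract_lt_one x).le⟩
  have hper : minorant N (x - ⌊x⌋ * 1) = minorant N x := trigPoly_periodic.sub_int_mul_eq ⌊x⌋
  rw [mul_one, Int.self_sub_floor] at hper
  rwa [hper] at h

theorem sawtooth_le_neg_minorant_neg {N : ℕ} (hN : 0 < N) (x : ℝ) :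
    Int.fract x - 1 / 2 ≤ -minorant N (-x) := by
  have h := minorant_le_sawtooth hN (-x)
  have hfract : Int.fract x + Int.fract (-x) ≤ 1 := by
    by_cases hx : Int.fract x = 0
    · rw [hx, Int.fract_neg_eq_zero.mpr hx]; norm_num
    · rw [Int.fract_neg hx]; ring_nf; rfl
  linarith

lemma indicator_eq_sawtooth {δ : ℝ} (hδ0 : 0 < δ) (hδ : δ < 1 / 2) (θ : ℝ) :
    (if (⨅ v : ℤ, |θ - v|) < δ then (1 : ℝ) else 0)
      = 2 * δ + (Int.fract (θ - δ) - 1 / 2) + (Int.fract (-θ - δ) - 1 / 2) := by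
  have hfloor : 2 * δ + (Int.fract (θ - δ) - 1 / 2) + (Int.fract (-θ - δ) - 1 / 2)
      = -(⌊θ - δ⌋ + ⌊-θ - δ⌋ + 1 : ℤ) := by
    rw [Int.fract, Int.fract]; push_cast; ring
  rw [hfloor]
  split_ifs with hc
  · obtain ⟨v, hv⟩ := exists_lt_of_ciInf_lt hc
    rw [abs_lt] at hv
    rw [show ⌊θ - δ⌋ = v - 1 by rw [Int.floor_eq_iff]; push_cast; constructor <;> linarith,
      show ⌊-θ - δ⌋ = -v - 1 by rw [Int.floor_eq_iff]; push_cast; constructor <;> linarith]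
    norm_num
  · rw [not_lt] at hc
    have hbdd : BddBelow (Set.range fun v : ℤ => |θ - v|) := ⟨0, by simp [lowerBounds]⟩
    have hv := hc.trans (ciInf_le hbdd (⌊θ - δ⌋ + 1))
    have h1 := Int.floor_le (θ - δ)
    have h2 := Int.lt_floor_add_one (θ - δ)
    push_cast at hv
    have hθ : θ + δ ≤ ⌊θ - δ⌋ + 1 := by rcases le_abs.mp hv with hv | hv <;> linarith
    rw [show ⌊-θ - δ⌋ = -(⌊θ - δ⌋ + 1) by
      rw [Int.floor_eq_iff]; push_cast; constructor <;> linarith]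
    push_cast
    ring

lemma sum_Icc_erase_zero (L : ℕ) (f : ℤ → ℂ) :
    ∑ ℓ ∈ (Icc (-(L : ℤ)) L).erase 0, f ℓ = ∑ n ∈ Icc 1 L, (f n + f (-n)) := by
  have hsplit : (Icc (-(L : ℤ)) L).erase 0
      = (Icc 1 L).map Nat.castEmbedding
        ∪ (Icc 1 L).map (Nat.castEmbedding.trans (Equiv.neg ℤ).toEmbedding) := by
    ext ℓ
    simp only [mem_erase, mem_Icc, mem_union, mem_map, Nat.castEmbedding_apply,
      Function.Embedding.trans_apply, Equiv.toEmbedding_apply, Equiv.neg_apply]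
    constructor
    · rintro ⟨h0, h1, h2⟩
      rcases lt_or_gt_of_ne h0 with h | h
      · exact Or.inr ⟨(-ℓ).toNat, by omega, by omega⟩
      · exact Or.inl ⟨ℓ.toNat, by omega, by omega⟩
    · rintro (⟨n, hn, rfl⟩ | ⟨n, hn, rfl⟩) <;> omega
  rw [hsplit, sum_union, sum_map, sum_map, sum_add_distrib]
  · rfl
  · rw [disjoint_left]
    simp only [mem_map, Nat.castEmbedding_apply, Function.Embedding.trans_apply,
      Equiv.toEmbedding_apply, Equiv.neg_apply, mem_Icc]
    rintro _ ⟨n, hn, rfl⟩ ⟨m, hm, h⟩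
    omega

lemma sum_natAbs_mul_exp_eq (L : ℕ) (c : ℕ → ℝ) (θ : ℝ) :
    ∑ ℓ ∈ (Icc (-(L : ℤ)) L).erase 0, (c ℓ.natAbs : ℂ) * Complex.exp (2 * π * Complex.I * ℓ * θ)
      = ((∑ n ∈ Icc 1 L, 2 * c n * cos (2 * π * n * θ) : ℝ) : ℂ) := by
  rw [sum_Icc_erase_zero, Complex.ofReal_sum]
  refine sum_congr rfl fun n _ => ?_
  rw [Int.natAbs_neg, Int.natAbs_natCast, ← mul_add]
  push_cast
  rw [show (2 : ℂ) * c n * Complex.cos (2 * π * n * θ) = c n * (2 * Complex.cos (2 * π * n * θ)) by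
    ring, Complex.two_cos]
  ring_nf

lemma trigPoly_sub_add_trigPoly_neg_sub {n : ℕ} {c : ℝ} {a b : ℕ → ℝ} (θ δ : ℝ) :
    trigPoly n c a b (θ - δ) + trigPoly n c a b (-θ - δ)
      = 2 * c + ∑ ℓ ∈ Icc 1 n,
          2 * (a ℓ * cos (2 * π * ℓ * δ) - b ℓ * sin (2 * π * ℓ * δ)) * cos (2 * π * ℓ * θ) := by
  simp only [trigPoly]
  rw [add_add_add_comm, ← sum_add_distrib, ← two_mul]
  congr 1
  refine sum_congr rfl fun ℓ _ => ?_
  rw [show 2 * π * ℓ * (θ - δ) = 2 * π * ℓ * θ - 2 * π * ℓ * δ by ring,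
    show 2 * π * ℓ * (-θ - δ) = -(2 * π * ℓ * θ + 2 * π * ℓ * δ) by ring,
    cos_neg, sin_neg, cos_sub, sin_sub, cos_add, sin_add]
  ring

def lowerCoeff (N : ℕ) (δ : ℝ) (n : ℕ) : ℝ :=
  -cos (2 * π * n * δ) * coeffA N n + sin (2 * π * n * δ) * coeffB N n

def upperCoeff (N : ℕ) (δ : ℝ) (n : ℕ) : ℝ :=
  cos (2 * π * n * δ) * coeffA N n + sin (2 * π * n * δ) * coeffB N n

section

variable {N n : ℕ} (hn : 0 < n) (hnN : n < N) {δ : ℝ} (hδ : 0 ≤ δ)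
include hn hnN hδ

lemma abs_lowerCoeff_le : |lowerCoeff N δ n| ≤ min (2 * δ + 1 / N) (3 / (2 * n)) :=
  abs_mul_coeffA_add_mul_coeffB_le hn hnN hδ (by rw [abs_neg]; exact abs_cos_le_one _) le_rfl

lemma abs_upperCoeff_le : |upperCoeff N δ n| ≤ min (2 * δ + 1 / N) (3 / (2 * n)) :=
  abs_mul_coeffA_add_mul_coeffB_le hn hnN hδ (abs_cos_le_one _) le_rfl

end

lemma minorant_sub_add_minorant_neg_sub (N : ℕ) (θ δ : ℝ) :
    minorant N (θ - δ) + minorant N (-θ - δ)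
      = -(1 / N) + ∑ n ∈ Icc 1 (N - 1), 2 * lowerCoeff N δ n * cos (2 * π * n * θ) := by
  rw [minorant, trigPoly_sub_add_trigPoly_neg_sub]
  congr 1
  · ring
  · exact sum_congr rfl fun n _ => by rw [lowerCoeff]; ring

lemma minorant_add_add_minorant_neg_add (N : ℕ) (θ δ : ℝ) :
    minorant N (θ + δ) + minorant N (-θ + δ)
      = -(1 / N) - ∑ n ∈ Icc 1 (N - 1), 2 * upperCoeff N δ n * cos (2 * π * n * θ) := by
  have h := trigPoly_sub_add_trigPoly_neg_sub (n := N - 1) (c := -(1 / (2 * N)))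
    (a := fun ℓ => -coeffA N ℓ) (b := fun ℓ => -coeffB N ℓ) θ (-δ)
  rw [sub_neg_eq_add, sub_neg_eq_add] at h
  rw [minorant, h, sub_eq_add_neg, ← sum_neg_distrib]
  congr 1
  · ring
  · refine sum_congr rfl fun n _ => ?_
    rw [upperCoeff, mul_neg, cos_neg, sin_neg]
    ring

end Vaaler

open Vaaler

theorem vaaler_approximation_general (L : ℕ) (δ : ℝ) (hδ0 : 0 < δ)
    (hδ : δ < 1 / 2) :
    ∃ cm cp : ℤ → ℂ,
      (∀ ℓ : ℤ, ℓ ≠ 0 → |ℓ| ≤ (L : ℤ) →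
        ‖cm ℓ‖ ≤ min (2 * δ + 1 / (L + 1)) (3 / (2 * |(ℓ : ℝ)|)) ∧
        ‖cp ℓ‖ ≤ min (2 * δ + 1 / (L + 1)) (3 / (2 * |(ℓ : ℝ)|))) ∧
      ∀ θ : ℝ,
        (∑ ℓ ∈ (Finset.Icc (-(L : ℤ)) (L : ℤ)).erase 0,
            cm ℓ * Complex.exp (2 * π * Complex.I * (ℓ : ℂ) * (θ : ℂ))).im = 0 ∧
        (∑ ℓ ∈ (Finset.Icc (-(L : ℤ)) (L : ℤ)).erase 0,
            cp ℓ * Complex.exp (2 * π * Complex.I * (ℓ : ℂ) * (θ : ℂ))).im = 0 ∧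
        2 * δ - 1 / (L + 1) +
            (∑ ℓ ∈ (Finset.Icc (-(L : ℤ)) (L : ℤ)).erase 0,
              cm ℓ * Complex.exp (2 * π * Complex.I * (ℓ : ℂ) * (θ : ℂ))).re
          ≤ (if (⨅ v : ℤ, |θ - v|) < δ then (1 : ℝ) else 0) ∧
        (if (⨅ v : ℤ, |θ - v|) < δ then (1 : ℝ) else 0)
          ≤ 2 * δ + 1 / (L + 1) +
            (∑ ℓ ∈ (Finset.Icc (-(L : ℤ)) (L : ℤ)).erase 0,
              cp ℓ * Complex.exp (2 * π * Complex.I * (ℓ : ℂ) * (θ : ℂ))).re := by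
  have hN : 0 < L + 1 := L.succ_pos
  refine ⟨fun ℓ => lowerCoeff (L + 1) δ ℓ.natAbs, fun ℓ => upperCoeff (L + 1) δ ℓ.natAbs,
    fun ℓ hℓ0 hℓL => ?_, fun θ => ?_⟩
  · have hn : 0 < ℓ.natAbs := Int.natAbs_pos.mpr hℓ0
    have hnN : ℓ.natAbs < L + 1 := by have := Int.abs_eq_natAbs ℓ ▸ hℓL; omega
    have hlower := abs_lowerCoeff_le hn hnN hδ0.le
    have hupper := abs_upperCoeff_le hn hnN hδ0.le
    push_cast at hlower hupper
    simp only [Complex.norm_real, Real.norm_eq_abs, ← Int.cast_abs, Int.abs_eq_natAbs,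
      Int.cast_natCast]
    exact ⟨hlower, hupper⟩
  · simp only [sum_natAbs_mul_exp_eq, Complex.ofReal_im, Complex.ofReal_re,
      indicator_eq_sawtooth hδ0 hδ θ]
    have hlow := minorant_sub_add_minorant_neg_sub (L + 1) θ δ
    have hup := minorant_add_add_minorant_neg_add (L + 1) θ δ
    have hψ₁ := sawtooth_le_neg_minorant_neg hN (θ - δ)
    have hψ₂ := sawtooth_le_neg_minorant_neg hN (-θ - δ)
    rw [Nat.add_sub_cancel] at hlow hup
    rw [show -(θ - δ) = -θ + δ by ring] at hψ₁
    rw [show -(-θ - δ) = θ + δ by ring] at hψ₂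
    push_cast at hlow hup
    refine ⟨trivial, trivial, ?_, ?_⟩
    · linarith [minorant_le_sawtooth hN (θ - δ), minorant_le_sawtooth hN (-θ - δ)]
    · linarith

/-- Vaaler/Selberg-type finite Fourier approximation: for a positive integer
`L` and `δ ∈ (0, 1/2)`, with `χ(θ) = 𝟙[‖θ‖ < δ]` (distance to the nearest
integer), there are complex sequences `(c_ℓ⁻)`, `(c_ℓ⁺)` supported on
`0 < |ℓ| ≤ L` with `|c_ℓ^{±}| ≤ min{2δ + 1/(L+1), 3/(2|ℓ|)}` such that the
trigonometric polynomials are real-valued and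
`2δ − 1/(L+1) + Σ c_ℓ⁻ e(ℓθ) ≤ χ(θ) ≤ 2δ + 1/(L+1) + Σ c_ℓ⁺ e(ℓθ)`. -/
theorem vaaler_approximation (L : ℕ) (hL : 0 < L) (δ : ℝ) (hδ0 : 0 < δ)
    (hδ : δ < 1 / 2) :
    ∃ cm cp : ℤ → ℂ,
      (∀ ℓ : ℤ, ℓ ≠ 0 → |ℓ| ≤ (L : ℤ) →
        ‖cm ℓ‖ ≤ min (2 * δ + 1 / (L + 1)) (3 / (2 * |(ℓ : ℝ)|)) ∧
        ‖cp ℓ‖ ≤ min (2 * δ + 1 / (L + 1)) (3 / (2 * |(ℓ : ℝ)|))) ∧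
      ∀ θ : ℝ,
        (∑ ℓ ∈ (Finset.Icc (-(L : ℤ)) (L : ℤ)).erase 0,
            cm ℓ * Complex.exp (2 * π * Complex.I * (ℓ : ℂ) * (θ : ℂ))).im = 0 ∧
        (∑ ℓ ∈ (Finset.Icc (-(L : ℤ)) (L : ℤ)).erase 0,
            cp ℓ * Complex.exp (2 * π * Complex.I * (ℓ : ℂ) * (θ : ℂ))).im = 0 ∧
        2 * δ - 1 / (L + 1) +
            (∑ ℓ ∈ (Finset.Icc (-(L : ℤ)) (L : ℤ)).erase 0,
              cm ℓ * Complex.exp (2 * π * Complex.I * (ℓ : ℂ) * (θ : ℂ))).re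
          ≤ (if (⨅ v : ℤ, |θ - v|) < δ then (1 : ℝ) else 0) ∧
        (if (⨅ v : ℤ, |θ - v|) < δ then (1 : ℝ) else 0)
          ≤ 2 * δ + 1 / (L + 1) +
            (∑ ℓ ∈ (Finset.Icc (-(L : ℤ)) (L : ℤ)).erase 0,
              cp ℓ * Complex.exp (2 * π * Complex.I * (ℓ : ℂ) * (θ : ℂ))).re :=
  vaaler_approximation_general L δ hδ0 hδ
end
end

section
/- Let x ≥ 2, and let a and d₁, d₂ be as follows: m, n positive integers with m·n ≤ x, m prime with y ≤ m ≤ z, and d₁, d₂ squarefree coprime divisors of n with d₂ | P(y) and P⁻(d₁) > m. Then with T = x²·δ^{−1} and R the quantity R = T^{−1} Σ 1/|log(P⁻(d₁) − 1/2) − log m| summed over all such tuples (m, n, d₁, d₂) with d₁ > 1, one has R ≪ δ·x^{o(1)}; more precisely R ≤ T^{−1}·x²·D(x) where D(x) = max_{r ≤ x} (number of divisor-pair decompositions), which is x^{o(1)}. -/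
/-!
Each summand is at most `2m + 1`, because `P⁻(d₁) - 1/2 ≥ m + 1/2`; and `m < P⁻(d₁) ≤ n` together
with `mn ≤ x` forces `m ≤ √x`. Summing over the at most `x / n` admissible `m` leaves
`(2√x + 1) x Σ_{n ≤ x} τ(n)² / n`. The map `(d₁, d₂) ↦ (g, d₁/g, d₂/g, n / lcm(d₁, d₂))`, with
`g = gcd(d₁, d₂)`, writes `n` injectively as a product of four factors, so
`Σ_{n ≤ x} τ(n)² / n ≤ (Σ_{k ≤ x} 1/k)⁴ ≤ (1 + log x)⁴`. Hence the sum is at most `x²` for large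
`x`, that is `R ≤ δ`, and both bounds follow from `x^ε ≥ 1` and `D(x) ≥ 1`.
-/

open Finset Real Filter Asymptotics
open scoped Classical

lemma one_div_abs_log_sub_log_le {a b h : ℝ} (ha : 0 < a) (hh : 0 < h) (hab : a + h ≤ b) :
    1 / |log b - log a| ≤ (a + h) / h := by
  have hgap : h / (a + h) ≤ log b - log a := calc
    h / (a + h) = 1 - ((a + h) / a)⁻¹ := by field_simp; ring
    _ ≤ log ((a + h) / a) := one_sub_inv_le_log_of_pos (by positivity)
    _ = log (a + h) - log a := log_div (by positivity) ha.ne'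
    _ ≤ log b - log a := by gcongr
  have hpos : 0 < h / (a + h) := by positivity
  rw [abs_of_pos (hpos.trans_le hgap)]
  calc 1 / (log b - log a) ≤ 1 / (h / (a + h)) := one_div_le_one_div_of_le hpos hgap
    _ = (a + h) / h := one_div_div _ _

lemma one_div_abs_log_sub_log_le_sqrt {m p n : ℕ} {x : ℝ} (hm : 0 < m) (hmp : m < p)
    (hpn : p ≤ n) (hmn : (m * n : ℝ) ≤ x) :
    1 / |log ((p : ℝ) - 1 / 2) - log m| ≤ 2 * √x + 1 := by
  have hm_sqrt : (m : ℝ) ≤ √x := by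
    have : (m : ℝ) ≤ n := by exact_mod_cast hmp.le.trans hpn
    exact le_sqrt_of_sq_le (by nlinarith)
  have hp : (m : ℝ) + 1 ≤ p := by exact_mod_cast hmp
  calc 1 / |log ((p : ℝ) - 1 / 2) - log m| ≤ ((m : ℝ) + 1 / 2) / (1 / 2) :=
        one_div_abs_log_sub_log_le (by positivity) (by norm_num) (by linarith)
    _ = 2 * m + 1 := by ring
    _ ≤ 2 * √x + 1 := by linarith

lemma card_filter_mul_le_div (N : ℕ) {n : ℕ} {x : ℝ} (hn : 0 < n) (hx : 0 ≤ x) :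
    ((Icc 1 N).filter (fun m : ℕ => (m * n : ℝ) ≤ x)).card ≤ x / n := by
  have hsub : (Icc 1 N).filter (fun m : ℕ => (m * n : ℝ) ≤ x) ⊆ Icc 1 ⌊x / n⌋₊ := by
    intro m hm
    rw [mem_filter, mem_Icc] at hm
    exact mem_Icc.2 ⟨hm.1.1, Nat.le_floor ((le_div_iff₀ (by positivity)).2 hm.2)⟩
  calc (((Icc 1 N).filter (fun m : ℕ => (m * n : ℝ) ≤ x)).card : ℝ) ≤ ⌊x / n⌋₊ := by
        exact_mod_cast (card_le_card hsub).trans (Nat.card_Icc 1 _).le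
    _ ≤ x / n := Nat.floor_le (by positivity)

def divisorPairSplit (t : Σ _ : ℕ, ℕ × ℕ) : Fin 4 → ℕ :=
  let g := t.2.1.gcd t.2.2
  ![g, t.2.1 / g, t.2.2 / g, t.1 / t.2.1.lcm t.2.2]

lemma prod_divisorPairSplit {n d₁ d₂ : ℕ} (h₁ : d₁ ∣ n) (h₂ : d₂ ∣ n) :
    ∏ i, divisorPairSplit ⟨n, d₁, d₂⟩ i = n := by
  have hlcm : d₁.lcm d₂ = d₁.gcd d₂ * (d₁ / d₁.gcd d₂) * (d₂ / d₁.gcd d₂) := by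
    rw [Nat.lcm_eq_mul_div, Nat.mul_div_cancel' (Nat.gcd_dvd_left d₁ d₂),
      Nat.mul_div_assoc _ (Nat.gcd_dvd_right d₁ d₂)]
  simp only [divisorPairSplit, Fin.prod_univ_four, Matrix.cons_val]
  rw [← hlcm, Nat.mul_div_cancel' (Nat.lcm_dvd h₁ h₂)]

lemma divisorPairSplit_injOn :
    Set.InjOn divisorPairSplit {t | t.2.1 ∣ t.1 ∧ t.2.2 ∣ t.1} := by
  rintro ⟨n, d₁, d₂⟩ ⟨h₁, h₂⟩ ⟨n', d₁', d₂'⟩ ⟨h₁', h₂'⟩ h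
  have hd₁ : d₁ = d₁' := calc
    d₁ = divisorPairSplit ⟨n, d₁, d₂⟩ 0 * divisorPairSplit ⟨n, d₁, d₂⟩ 1 :=
      (Nat.mul_div_cancel' (Nat.gcd_dvd_left _ _)).symm
    _ = divisorPairSplit ⟨n', d₁', d₂'⟩ 0 * divisorPairSplit ⟨n', d₁', d₂'⟩ 1 := by rw [h]
    _ = d₁' := Nat.mul_div_cancel' (Nat.gcd_dvd_left _ _)
  have hd₂ : d₂ = d₂' := calc
    d₂ = divisorPairSplit ⟨n, d₁, d₂⟩ 0 * divisorPairSplit ⟨n, d₁, d₂⟩ 2 :=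
      (Nat.mul_div_cancel' (Nat.gcd_dvd_right _ _)).symm
    _ = divisorPairSplit ⟨n', d₁', d₂'⟩ 0 * divisorPairSplit ⟨n', d₁', d₂'⟩ 2 := by rw [h]
    _ = d₂' := Nat.mul_div_cancel' (Nat.gcd_dvd_right _ _)
  subst hd₁ hd₂
  have hn : n = n' := calc
    n = d₁.lcm d₂ * divisorPairSplit ⟨n, d₁, d₂⟩ 3 := (Nat.mul_div_cancel' (Nat.lcm_dvd h₁ h₂)).symm
    _ = d₁.lcm d₂ * divisorPairSplit ⟨n', d₁, d₂⟩ 3 := by rw [h]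
    _ = n' := Nat.mul_div_cancel' (Nat.lcm_dvd h₁' h₂')
  rw [hn]

lemma sum_card_divisors_sq_div_le (N : ℕ) :
    ∑ n ∈ Icc 1 N, (n.divisors.card : ℝ) ^ 2 / n ≤ (∑ k ∈ Icc 1 N, (k : ℝ)⁻¹) ^ 4 := by
  set s := (Icc 1 N).sigma fun n => n.divisors ×ˢ n.divisors
  have hs : ∀ t ∈ s, t.2.1 ∣ t.1 ∧ t.2.2 ∣ t.1 ∧ t.1 ∈ Icc 1 N := by
    intro t ht
    simp only [s, mem_sigma, mem_product, Nat.mem_divisors] at ht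
    exact ⟨ht.2.1.1, ht.2.2.1, ht.1⟩
  have hmaps : ∀ t ∈ s, divisorPairSplit t ∈ Fintype.piFinset fun _ => Icc 1 N := by
    rintro ⟨n, d₁, d₂⟩ ht
    obtain ⟨h₁, h₂, hn⟩ : d₁ ∣ n ∧ d₂ ∣ n ∧ n ∈ Icc 1 N := hs _ ht
    rw [mem_Icc] at hn
    refine Fintype.mem_piFinset.2 fun i => ?_
    have hi : divisorPairSplit ⟨n, d₁, d₂⟩ i ∣ n :=
      (dvd_prod_of_mem _ (mem_univ i)).trans (prod_divisorPairSplit h₁ h₂).dvd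
    exact mem_Icc.2 ⟨Nat.pos_of_dvd_of_pos hi (by omega), hn.2.trans' (Nat.le_of_dvd (by omega) hi)⟩
  calc ∑ n ∈ Icc 1 N, (n.divisors.card : ℝ) ^ 2 / n
      = ∑ t ∈ s, ((∏ i, divisorPairSplit t i : ℕ) : ℝ)⁻¹ := by
        rw [sum_sigma]
        refine sum_congr rfl fun n _ => ?_
        have hprod : ∀ p ∈ n.divisors ×ˢ n.divisors,
            ((∏ i, divisorPairSplit ⟨n, p⟩ i : ℕ) : ℝ)⁻¹ = (n : ℝ)⁻¹ := fun p hp => by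
          rw [mem_product] at hp
          rw [prod_divisorPairSplit (Nat.dvd_of_mem_divisors hp.1) (Nat.dvd_of_mem_divisors hp.2)]
        rw [sum_congr rfl hprod, sum_const, card_product, nsmul_eq_mul]
        push_cast
        ring
    _ = ∑ f ∈ s.image divisorPairSplit, ((∏ i, f i : ℕ) : ℝ)⁻¹ :=
        (sum_image (f := fun f : Fin 4 → ℕ => ((∏ i, f i : ℕ) : ℝ)⁻¹) fun t ht t' ht' =>
          divisorPairSplit_injOn ⟨(hs t ht).1, (hs t ht).2.1⟩ ⟨(hs t' ht').1, (hs t' ht').2.1⟩).symm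
    _ ≤ ∑ f ∈ Fintype.piFinset fun _ => Icc 1 N, ((∏ i, f i : ℕ) : ℝ)⁻¹ :=
        sum_le_sum_of_subset_of_nonneg (image_subset_iff.2 hmaps) fun _ _ _ => by positivity
    _ = (∑ k ∈ Icc 1 N, (k : ℝ)⁻¹) ^ 4 := by
        rw [← Fin.prod_const, prod_univ_sum]
        push_cast [prod_inv_distrib]
        rfl

lemma sum_inv_le_one_add_log {N : ℕ} {x : ℝ} (hN : 1 ≤ N) (hNx : (N : ℝ) ≤ x) :
    ∑ k ∈ Icc 1 N, (k : ℝ)⁻¹ ≤ 1 + log x := by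
  have h := harmonic_le_one_add_log N
  simp only [harmonic_eq_sum_Icc, Rat.cast_sum, Rat.cast_inv, Rat.cast_natCast] at h
  linarith [log_le_log (by exact_mod_cast hN) hNx]

lemma eventually_sqrt_mul_one_add_log_pow_le :
    ∀ᶠ x : ℝ in atTop, (2 * √x + 1) * x * (1 + log x) ^ 4 ≤ x ^ 2 := by
  have hlog : (fun x : ℝ => 1 + log x) =o[atTop] fun x => x ^ (8⁻¹ : ℝ) :=
    ((isLittleO_one_left_iff ℝ).2 ((tendsto_rpow_atTop (by norm_num)).congr' <|
      (eventually_ge_atTop 0).mono fun x hx => (norm_of_nonneg (by positivity)).symm)).add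
      (isLittleO_log_rpow_atTop (by norm_num))
  filter_upwards [(hlog.pow four_pos).bound (by norm_num : (0 : ℝ) < 3⁻¹),
    eventually_ge_atTop 1] with x hbound hx
  have hpow : (x ^ (8⁻¹ : ℝ)) ^ 4 = √x := by
    rw [← rpow_natCast, ← rpow_mul (by positivity), sqrt_eq_rpow]; norm_num
  rw [hpow, norm_of_nonneg (by positivity), norm_of_nonneg (by positivity)] at hbound
  have hsqrt : 1 ≤ √x := one_le_sqrt.2 hx
  calc (2 * √x + 1) * x * (1 + log x) ^ 4 ≤ (3 * √x) * x * (3⁻¹ * √x) := by gcongr; linarith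
    _ = x ^ 2 := by linear_combination x * mul_self_sqrt (by positivity : 0 ≤ x)

noncomputable def perronRemainderSum (x y z : ℝ) : ℝ :=
  ∑ m ∈ Finset.Icc 1 ⌊x⌋₊, ∑ n ∈ Finset.Icc 1 ⌊x⌋₊,
    ∑ d₁ ∈ n.divisors, ∑ d₂ ∈ n.divisors,
      if ((m * n : ℝ) ≤ x ∧ m.Prime ∧ y ≤ (m : ℝ) ∧ (m : ℝ) ≤ z ∧
          d₁ * d₂ ∣ n ∧ Squarefree (d₁ * d₂) ∧
          (∀ p : ℕ, p.Prime → p ∣ d₂ → (p : ℝ) < y) ∧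
          m < d₁.minFac ∧ 1 < d₁)
      then 1 / |Real.log ((d₁.minFac : ℝ) - 1 / 2) - Real.log m| else 0

lemma perronRemainderSum_le {x : ℝ} (hx : 1 ≤ x) (y z : ℝ) :
    perronRemainderSum x y z ≤ (2 * √x + 1) * x * (1 + log x) ^ 4 := by
  set N := ⌊x⌋₊
  have hN : 1 ≤ N := Nat.le_floor (by exact_mod_cast hx)
  calc perronRemainderSum x y z
      ≤ ∑ m ∈ Icc 1 N, ∑ n ∈ Icc 1 N, ∑ d₁ ∈ n.divisors, ∑ d₂ ∈ n.divisors,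
          if (m * n : ℝ) ≤ x then 2 * √x + 1 else 0 := by
        unfold perronRemainderSum
        gcongr with m _ n _ d₁ hd₁ d₂ _
        split_ifs with hC hQ hQ
        · obtain ⟨hmn, hm, -, -, -, -, -, hmp, -⟩ := hC
          exact one_div_abs_log_sub_log_le_sqrt hm.pos hmp
            ((Nat.minFac_le (Nat.pos_of_mem_divisors hd₁)).trans (Nat.divisor_le hd₁)) hmn
        · exact absurd hC.1 hQ
        · positivity
        · rfl
    _ = ∑ n ∈ Icc 1 N, (n.divisors.card : ℝ) ^ 2 *
          ∑ m ∈ Icc 1 N, if (m * n : ℝ) ≤ x then 2 * √x + 1 else 0 := by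
        rw [sum_comm]
        simp only [sum_const, nsmul_eq_mul, mul_sum]
        ring_nf
    _ ≤ ∑ n ∈ Icc 1 N, (n.divisors.card : ℝ) ^ 2 * ((2 * √x + 1) * (x / n)) := by
        gcongr with n hn
        rw [← sum_filter, sum_const, nsmul_eq_mul, mul_comm]
        gcongr
        exact card_filter_mul_le_div N (mem_Icc.1 hn).1 (by linarith)
    _ = (2 * √x + 1) * x * ∑ n ∈ Icc 1 N, (n.divisors.card : ℝ) ^ 2 / n := by
        rw [mul_sum]
        refine sum_congr rfl fun n _ => by ring
    _ ≤ (2 * √x + 1) * x * (1 + log x) ^ 4 := by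
        gcongr
        exact (sum_card_divisors_sq_div_le N).trans (by
          gcongr; exact sum_inv_le_one_add_log hN (Nat.floor_le (by linarith)))

/-- The remainder term `R` in the truncated Perron argument: with
`T = x²·δ⁻¹`, the sum `R = T⁻¹ Σ 1/|log(P⁻(d₁) − 1/2) − log m|` over tuples
`(m, n, d₁, d₂)` with `mn ≤ x`, `m` prime in `[y, z]`, `d₁d₂` a squarefree
divisor of `n`, `d₂ ∣ P(y)`, `P⁻(d₁) > m` and `d₁ > 1`, satisfies
`R ≪ δ·x^{o(1)}`; more precisely `R ≤ T⁻¹·x²·D(x)` where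
`D(x) = max_{r ≤ x} (number of divisor-pair decompositions) = x^{o(1)}`. -/
theorem perron_remainder_bound :
    ∀ ε > (0 : ℝ), ∃ X : ℝ, ∀ x : ℝ, X ≤ x → ∀ y z δ : ℝ, 0 < δ → δ < 1 → 2 ≤ y →
      (x ^ 2 / δ)⁻¹ *
          (∑ m ∈ Finset.Icc 1 ⌊x⌋₊, ∑ n ∈ Finset.Icc 1 ⌊x⌋₊,
            ∑ d₁ ∈ n.divisors, ∑ d₂ ∈ n.divisors,
              if ((m * n : ℝ) ≤ x ∧ m.Prime ∧ y ≤ (m : ℝ) ∧ (m : ℝ) ≤ z ∧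
                  d₁ * d₂ ∣ n ∧ Squarefree (d₁ * d₂) ∧
                  (∀ p : ℕ, p.Prime → p ∣ d₂ → (p : ℝ) < y) ∧
                  m < d₁.minFac ∧ 1 < d₁)
              then 1 / |Real.log ((d₁.minFac : ℝ) - 1 / 2) - Real.log m| else 0)
        ≤ δ * x ^ ε ∧
      (x ^ 2 / δ)⁻¹ *
          (∑ m ∈ Finset.Icc 1 ⌊x⌋₊, ∑ n ∈ Finset.Icc 1 ⌊x⌋₊,
            ∑ d₁ ∈ n.divisors, ∑ d₂ ∈ n.divisors,
              if ((m * n : ℝ) ≤ x ∧ m.Prime ∧ y ≤ (m : ℝ) ∧ (m : ℝ) ≤ z ∧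
                  d₁ * d₂ ∣ n ∧ Squarefree (d₁ * d₂) ∧
                  (∀ p : ℕ, p.Prime → p ∣ d₂ → (p : ℝ) < y) ∧
                  m < d₁.minFac ∧ 1 < d₁)
              then 1 / |Real.log ((d₁.minFac : ℝ) - 1 / 2) - Real.log m| else 0)
        ≤ (x ^ 2 / δ)⁻¹ * x ^ 2 *
            (((Finset.Icc 1 ⌊x⌋₊).sup
              (fun r : ℕ => r.divisors.card * r.divisors.card) : ℕ) : ℝ) := by
  intro ε hε
  obtain ⟨X, hX⟩ := eventually_atTop.1
    ((eventually_ge_atTop 1).and eventually_sqrt_mul_one_add_log_pow_le)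
  refine ⟨X, fun x hx y z δ hδ _ _ => ?_⟩
  obtain ⟨hx, hbound⟩ := hX x hx
  have hT : (x ^ 2 / δ)⁻¹ * x ^ 2 = δ := by field_simp
  have hR : (x ^ 2 / δ)⁻¹ * perronRemainderSum x y z ≤ δ := calc
    _ ≤ (x ^ 2 / δ)⁻¹ * x ^ 2 := by gcongr; exact (perronRemainderSum_le hx y z).trans hbound
    _ = δ := hT
  have hD : 1 ≤ (((Icc 1 ⌊x⌋₊).sup fun r : ℕ => r.divisors.card * r.divisors.card : ℕ) : ℝ) := by
    have h1 : 1 ∈ Icc 1 ⌊x⌋₊ := mem_Icc.2 ⟨le_rfl, Nat.le_floor (by exact_mod_cast hx)⟩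
    exact Nat.one_le_cast.2
      (by simpa using le_sup (f := fun r : ℕ => r.divisors.card * r.divisors.card) h1)
  rw [hT]
  exact ⟨hR.trans (le_mul_of_one_le_right hδ.le (one_le_rpow hx hε.le)),
    hR.trans (le_mul_of_one_le_right hδ.le hD)⟩
end
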